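/- arXiv:2210.05269 — 3 statements merged into one kernel-verified Lean document; each statement's English description precedes it below -/
import Mathlib

section
/- For every integer n >= 1, the ploidy profile (2^n, 2^{n-1}, ..., 2^1, 2^0) is tree-child; in particular, the realization N(m) of this profile obtained by initializing the traceback construction with the core network B(m) is a tree-child phylogenetic network. -/
/-!
Formalization preamble for "Autopolyploidy, allopolyploidy, and phylogenetic
networks with horizontal arcs" (Huber & Maher).

Networks are finite directed multigraphs whose vertices and arcs are (finitely
many) natural numbers; parallel arcs (beads) are allowed, loops are not.
-/

namespace Ploidy

/-- A finite directed multigraph: both vertex names and arc identifiers are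
natural numbers; `src`/`tgt` give the endpoints of each arc. -/
structure Net where
  verts : Finset ℕ
  arcs : Finset ℕ
  src : ℕ → ℕ
  tgt : ℕ → ℕ

/-- The indegree of a vertex. -/
def inDeg (G : Net) (v : ℕ) : ℕ := (G.arcs.filter fun a => G.tgt a = v).card

/-- The outdegree of a vertex. -/
def outDeg (G : Net) (v : ℕ) : ℕ := (G.arcs.filter fun a => G.src a = v).card

def IsLeafN (G : Net) (v : ℕ) : Prop := v ∈ G.verts ∧ inDeg G v = 1 ∧ outDeg G v = 0
def IsTreeVert (G : Net) (v : ℕ) : Prop := v ∈ G.verts ∧ inDeg G v = 1 ∧ outDeg G v = 2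
def IsReticN (G : Net) (v : ℕ) : Prop := v ∈ G.verts ∧ inDeg G v = 2 ∧ outDeg G v = 1
def IsRootN (G : Net) (v : ℕ) : Prop := v ∈ G.verts ∧ inDeg G v = 0

instance (G : Net) (v : ℕ) : Decidable (IsLeafN G v) :=
  decidable_of_iff (v ∈ G.verts ∧ inDeg G v = 1 ∧ outDeg G v = 0) Iff.rfl

/-- `IsWalk G l u v`: the list of arcs `l` forms a directed walk from `u` to `v`. -/
def IsWalk (G : Net) : List ℕ → ℕ → ℕ → Prop
  | [], u, v => u = v ∧ u ∈ G.verts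
  | a :: l, u, v => a ∈ G.arcs ∧ G.src a = u ∧ IsWalk G l (G.tgt a) v

/-- The number of directed paths from `u` to `v` (in a DAG every directed walk is
a path, and there are finitely many of them). -/
noncomputable def nPaths (G : Net) (u v : ℕ) : ℕ := Set.ncard {l : List ℕ | IsWalk G l u v}

/-- `a` is an arc from `u` to `v`. -/
def ArcFT (G : Net) (a u v : ℕ) : Prop := a ∈ G.arcs ∧ G.src a = u ∧ G.tgt a = v

/-- `u` is a parent of `v`. -/
def IsParent (G : Net) (u v : ℕ) : Prop := ∃ a, ArcFT G a u v

/-- `w` is below `u` (reachable from `u` by a directed walk, possibly `u = w`). -/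
def BelowV (G : Net) (u w : ℕ) : Prop := ∃ l, IsWalk G l u w

/-- `v` is an end vertex of a pair of parallel arcs (a bead). -/
def InBead (G : Net) (v : ℕ) : Prop :=
  ∃ a b, a ∈ G.arcs ∧ b ∈ G.arcs ∧ a ≠ b ∧ G.src a = G.src b ∧ G.tgt a = G.tgt b ∧
    (G.src a = v ∨ G.tgt a = v)

/-- `G` is beadless: there is no pair of parallel arcs. -/
def Beadless (G : Net) : Prop := ∀ v, ¬ InBead G v

/-- `G` is a (rooted, binary) phylogenetic network in the sense of Huber–Maher:
a rooted DAG, possibly with beads but without loops, with a unique root of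
indegree 0 and outdegree 2, all of whose other vertices are leaves, tree
vertices or reticulation vertices. -/
structure IsPhylo (G : Net) : Prop where
  src_mem : ∀ a ∈ G.arcs, G.src a ∈ G.verts
  tgt_mem : ∀ a ∈ G.arcs, G.tgt a ∈ G.verts
  no_loop : ∀ a ∈ G.arcs, G.src a ≠ G.tgt a
  acyclic : ∀ (v : ℕ) (l : List ℕ), l ≠ [] → ¬ IsWalk G l v v
  root_exu : ∃! r, IsRootN G r
  root_out : ∀ r, IsRootN G r → outDeg G r = 2
  types : ∀ v ∈ G.verts, IsRootN G v ∨ IsLeafN G v ∨ IsTreeVert G v ∨ IsReticN G v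

/-- An HGT-consistent labelling: (P1), (P2) and (P3) (the latter required only for
reticulation vertices not contained in beads). -/
def IsHGT (G : Net) (t : ℕ → ℝ) : Prop :=
  (∀ v ∈ G.verts, 0 ≤ t v) ∧
  (∀ a ∈ G.arcs,
      (IsReticN G (G.tgt a) → t (G.src a) ≤ t (G.tgt a)) ∧
      (¬ IsReticN G (G.tgt a) → t (G.src a) < t (G.tgt a))) ∧
  (∀ u ∈ G.verts, ¬ IsLeafN G u → ∃ v, IsParent G u v ∧ t u < t v) ∧
  (∀ v, IsReticN G v → ¬ InBead G v → ∃! u, IsParent G u v ∧ t u = t v)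

/-- `v` is a reticulation vertex (not contained in a bead) violating (P3). -/
def ViolatesP3 (G : Net) (t : ℕ → ℝ) (v : ℕ) : Prop :=
  IsReticN G v ∧ ¬ InBead G v ∧ ¬ (∃! u, IsParent G u v ∧ t u = t v)

/-- A weak HGT-consistent labelling: (P1), (P2) and (P3'): at most one reticulation
vertex `v`, with distinct parents `u₁, u₂` such that `u₂` is below `u₁` and
`t u₁ ≠ t v ≠ t u₂`, violates (P3). -/
def IsWeakHGT (G : Net) (t : ℕ → ℝ) : Prop :=
  (∀ v ∈ G.verts, 0 ≤ t v) ∧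
  (∀ a ∈ G.arcs,
      (IsReticN G (G.tgt a) → t (G.src a) ≤ t (G.tgt a)) ∧
      (¬ IsReticN G (G.tgt a) → t (G.src a) < t (G.tgt a))) ∧
  (∀ u ∈ G.verts, ¬ IsLeafN G u → ∃ v, IsParent G u v ∧ t u < t v) ∧
  (∀ v w, ViolatesP3 G t v → ViolatesP3 G t w → v = w) ∧
  (∀ v, ViolatesP3 G t v →
      ∃ u1 u2, u1 ≠ u2 ∧ IsParent G u1 v ∧ IsParent G u2 v ∧ BelowV G u1 u2 ∧
        t u1 ≠ t v ∧ t u2 ≠ t v)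

/-! ### Ploidy profiles and the simplification sequence -/

/-- A ploidy profile: a nonempty descending list of positive integers; the entry at
(0-based) position `i` is indexed by the taxon `x_{i+1}`. -/
def IsProfileL (l : List ℕ) : Prop := l ≠ [] ∧ l.Pairwise (· ≥ ·) ∧ ∀ x ∈ l, 1 ≤ x

/-- A simple ploidy profile: first component at least 2, all other components 1. -/
def IsSimpleP (l : List ℕ) : Prop := l ≠ [] ∧ 2 ≤ l.headI ∧ ∀ x ∈ l.tail, x = 1

/-- A strictly simple ploidy profile. -/
def IsStrictlySimpleP (l : List ℕ) : Prop := IsSimpleP l ∧ l.length = 1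

/-- Insert `x` into a descending list, directly after the last occurrence of the
value `x` (i.e. after all entries `≥ x`). -/
def insertDesc (x : ℕ) : List ℕ → List ℕ
  | [] => [x]
  | y :: ys => if x ≤ y then y :: insertDesc x ys else x :: y :: ys

/-- One step of the simplification process for ploidy profiles; simple profiles are
fixed points.  With `α = m₁ - m₂`: if `α = 0` delete `m₁`; if `α > m₂` replace `m₁`
by `α`; if `0 < α ≤ m₂` delete `m₁` and insert `α` directly after the last
occurrence of the value `α`. -/
def simpStep (l : List ℕ) : List ℕ :=
  if 2 ≤ l.headI ∧ ∀ x ∈ l.tail, x = 1 then l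
  else
    match l with
    | m1 :: m2 :: rest =>
        if m1 = m2 then m2 :: rest
        else if m2 < m1 - m2 then (m1 - m2) :: m2 :: rest
        else insertDesc (m1 - m2) (m2 :: rest)
    | _ => l

/-- `mt` is the (simple) terminal element of the simplification sequence of `m`. -/
def IsTerminal (m mt : List ℕ) : Prop := IsSimpleP mt ∧ ∃ k, simpStep^[k] m = mt

/-- A practical ploidy profile: simple but not strictly simple, or `(2^l)`, `l ≥ 1`. -/
def Practical (l : List ℕ) : Prop :=
  (IsSimpleP l ∧ 2 ≤ l.length) ∨ (l.length = 1 ∧ ∃ j, 1 ≤ j ∧ l.headI = 2 ^ j)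

/-- An arc-rich (strictly simple) ploidy profile: the binary representation of its
single component has dimension at least two. -/
def ArcRich (l : List ℕ) : Prop :=
  l.length = 1 ∧ 2 ≤ l.headI ∧ 2 ≤ (Nat.bits l.headI).count true

/-! ### Realizations of ploidy profiles -/

/-- A network together with an indexing of its leaves by the positions of a
ploidy profile. -/
structure LNet where
  net : Net
  leaf : ℕ → ℕ

/-- `R` is a phylogenetic network realizing the ploidy profile `m`: the leaves of
`R.net` are bijectively indexed by the positions of `m` and, for every `i`, the
number of directed paths from the root to the leaf `R.leaf i` is the `i`-th
component of `m`. -/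
def RealizesL (R : LNet) (m : List ℕ) : Prop :=
  IsPhylo R.net ∧
  (∀ i < m.length, IsLeafN R.net (R.leaf i)) ∧
  (∀ i j, i < m.length → j < m.length → R.leaf i = R.leaf j → i = j) ∧
  (∀ v, IsLeafN R.net v → ∃ i < m.length, R.leaf i = v) ∧
  (∀ i < m.length, ∀ r, IsRootN R.net r → nPaths R.net r (R.leaf i) = m.getD i 0)

/-! ### Concrete constructions: bead chains and the core network `B(m)` -/

/-- Build a network from a list of arcs (as (source, target) pairs); arc
identifiers are positions in the list, so repeated pairs yield beads. -/
def mkNet (l : List (ℕ × ℕ)) : Net where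
  verts := (l.map Prod.fst ++ l.map Prod.snd).toFinset
  arcs := Finset.range l.length
  src := fun i => (l.getD i (0, 0)).1
  tgt := fun i => (l.getD i (0, 0)).2

/-- The chain `B(l)` of `l` beads with a pendant leaf: vertex `2*j` is the tree
vertex of the `(j+1)`-st bead, `2*j+1` its reticulation vertex `h_{j+1}`, there is
an arc from `h_j` to the tree vertex of the next bead, and `2*l` is the pendant
leaf `x₁` attached by the arc `(h_l, x₁)`. -/
def beadChain (l : ℕ) : Net :=
  mkNet ((List.range l).flatMap fun j => [(2*j, 2*j+1), (2*j, 2*j+1), (2*j+1, 2*j+2)])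

/-- The decreasing list `(i₁, …, i_k)` of exponents of the binary representation
of `m₁`. -/
def expList (m1 : ℕ) : List ℕ :=
  ((List.range (m1+1)).filter fun j => m1.testBit j).reverse

/-- First vertex code available for the leaves `x_2, …, x_n` in `BNet`. -/
def xBase (m1 : ℕ) : ℕ := 2 * (expList m1).headI + 2 * (expList m1).length + 10

/-- The arcs of the core network `B(m)` for the simple profile `(m₁, 1, …, 1)` on
`n` taxa: a chain of `i₁` beads with pendant leaf `x₁ = 0` (root is the vertex
`2`), one root arc subdivided by `s_k` and, for `2 ≤ j ≤ k`, an arc `(s_j, s_j')`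
where `s_j'` subdivides the outgoing arc of the reticulation vertex having exactly
`i_j` reticulation vertices strictly below it and `s_2, …, s_{k-1}` subdivide the
arc `(s_k, s_k')`; if `n ≥ 2` a caterpillar tree on the leaves `x_2, …, x_n`
(codes `xBase m₁ + i`) is attached via a subdivision vertex `w` (placed on a root
arc if `k = 1`, on `(s_k, s_k')` if `k = 2`, and on `(s_{k-1}, s_k')` if `k ≥ 3`). -/
def BArcs (m1 n : ℕ) : List (ℕ × ℕ) :=
  let E := expList m1
  let k := E.length
  let i1 := E.headI
  let hv : ℕ → ℕ := fun j => 2*j + 1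
  let tv : ℕ → ℕ := fun j => 2*j
  let nxt : ℕ → ℕ := fun j => if j = i1 then 0 else 2*j + 2
  let S' : ℕ → ℕ := fun j => 2*i1 + 2 + j
  let P : ℕ → ℕ := fun j => 2*i1 + k + 2 + j
  let w : ℕ := 2*i1 + 2*k + 4
  let L : ℕ := 2*i1 + 2*k + 10
  let x : ℕ → ℕ := fun i => L + i
  let cv : ℕ → ℕ := fun i => L + n + i
  let r : ℕ → ℕ := fun t => i1 - E.getD (t-1) 0
  let rootArcs : List (ℕ × ℕ) :=
    if 2 ≤ k then [(tv 1, hv 1), (tv 1, P k), (P k, hv 1)]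
    else if 2 ≤ n then [(tv 1, hv 1), (tv 1, w), (w, hv 1)]
    else [(tv 1, hv 1), (tv 1, hv 1)]
  let otherBeads : List (ℕ × ℕ) :=
    (List.range' 2 (i1 - 1)).flatMap fun j => [(tv j, hv j), (tv j, hv j)]
  let chainArcs : List (ℕ × ℕ) :=
    (List.range' 1 i1).flatMap fun j =>
      match (List.range' 2 (k-1)).find? (fun t => r t == j) with
      | some t => [(hv j, S' t), (S' t, nxt j)]
      | none => [(hv j, nxt j)]
  let sChain : List ℕ :=
    [P k] ++ (List.range' 2 (k-2)).map P ++ (if 2 ≤ n then [w] else []) ++ [S' k]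
  let sArcs : List (ℕ × ℕ) :=
    if 2 ≤ k then (sChain.zip sChain.tail) ++ (List.range' 2 (k-2)).map (fun j => (P j, S' j))
    else []
  let catArcs : List (ℕ × ℕ) :=
    if n ≤ 1 then []
    else if n = 2 then [(w, x 2)]
    else [(w, cv 2)] ++
      ((List.range' 2 (n-3)).flatMap fun i => [(cv i, x i), (cv i, cv (i+1))]) ++
      [(cv (n-1), x (n-1)), (cv (n-1), x n)]
  rootArcs ++ otherBeads ++ chainArcs ++ sArcs ++ catArcs

/-- The core network `B(m)` for a simple profile with first component `m1` on `n`
taxa. -/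
def BNet (m1 n : ℕ) : Net := mkNet (BArcs m1 n)

/-- The core network `B(m)` of a ploidy profile whose terminal element is `mt`,
together with its leaf indexing (leaf `0` is `x₁ = 0`, leaf `i` is `x_{i+1}`). -/
def BLNet (mt : List ℕ) : LNet where
  net := BNet mt.headI mt.length
  leaf := fun i => if i = 0 then 0 else xBase mt.headI + (i + 1)

/-- The naive realization of the simple profile `(m₁, 1, …, 1)` on `n` taxa: a
directed path `0, 1, …, n + 2m₁ - 3` (with `v_j = j - 1`, `w_i = m₁ + i - 3`,
`v_j' = n + 2m₁ - 3 - j` and `x₁ = n + 2m₁ - 3`) together with the arcs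
`(v_j, v_j')` and the pendant leaf arcs `(w_i, x_i)` with `x_i = n + 2m₁ + i`. -/
def naiveNet (m1 n : ℕ) : Net :=
  mkNet (((List.range (n + 2*m1 - 3)).map fun p => (p, p+1)) ++
    ((List.range' 1 (m1 - 1)).map fun j => (j - 1, n + 2*m1 - 3 - j)) ++
    ((List.range' 2 (n - 1)).map fun i => (m1 + i - 3, n + 2*m1 + i)))

/-! ### Cherry modification operations -/

/-- `reduce(a,b)`: delete the leaf `b` of the cherry `{a,b}` together with its
incoming arc and suppress the resulting degree-two vertex (collapsing the network
to the single vertex `a` when the common parent is the root). -/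
def ReduceOp (G G' : Net) : Prop :=
  ∃ a b p ea eb, a ≠ b ∧ IsLeafN G a ∧ IsLeafN G b ∧
    ArcFT G ea p a ∧ ArcFT G eb p b ∧ ea ≠ eb ∧
    G'.verts = (G.verts.erase b).erase p ∧
    G'.arcs = (G.arcs.erase eb).erase ea ∧
    ((IsRootN G p ∧ ∀ e ∈ G'.arcs, G'.src e = G.src e ∧ G'.tgt e = G.tgt e) ∨
     (∃ ep q, ArcFT G ep q p ∧
        (∀ e ∈ G'.arcs, e ≠ ep → G'.src e = G.src e ∧ G'.tgt e = G.tgt e) ∧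
        G'.src ep = q ∧ G'.tgt ep = a))

/-- `cut(a,b)`: delete the reticulation arc of the reticulate cherry `{a,b}` with
reticulation leaf `b`, suppressing the two resulting degree-two vertices. -/
def CutOp (G G' : Net) : Prop :=
  ∃ a b pa pb e1 e2 e3 e4 e5 q r,
    a ≠ b ∧ IsLeafN G a ∧ IsLeafN G b ∧ IsReticN G pb ∧
    ArcFT G e1 pa a ∧ ArcFT G e2 pb b ∧ ArcFT G e3 pa pb ∧
    ArcFT G e4 q pb ∧ e3 ≠ e4 ∧ ArcFT G e5 r pa ∧
    G'.verts = (G.verts.erase pa).erase pb ∧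
    G'.arcs = ((G.arcs.erase e3).erase e1).erase e2 ∧
    (∀ e ∈ G'.arcs, e ≠ e4 → e ≠ e5 → G'.src e = G.src e ∧ G'.tgt e = G.tgt e) ∧
    G'.src e5 = r ∧ G'.tgt e5 = a ∧
    G'.src e4 = q ∧ G'.tgt e4 = b

/-- `simp(a)`: for a type-1 degenerate cherry `{a}` (sole leaf whose parent is the
reticulation vertex of a bead), delete one arc of the bead, suppressing the
resulting degree-two vertex and collapsing the outgoing arc of the tree vertex of
the bead. -/
def SimpOp (G G' : Net) : Prop :=
  ∃ a h u e1 e2 e3,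
    IsLeafN G a ∧ (∀ w, IsLeafN G w → w = a) ∧ IsReticN G h ∧
    ArcFT G e1 u h ∧ ArcFT G e2 u h ∧ e1 ≠ e2 ∧ ArcFT G e3 h a ∧
    ((IsRootN G u ∧ G'.verts = {a} ∧ G'.arcs = ∅) ∨
     (∃ eu q, ArcFT G eu q u ∧
        G'.verts = (G.verts.erase h).erase u ∧
        G'.arcs = ((G.arcs.erase e2).erase e3).erase e1 ∧
        (∀ e ∈ G'.arcs, e ≠ eu → G'.src e = G.src e ∧ G'.tgt e = G.tgt e) ∧
        G'.src eu = q ∧ G'.tgt eu = a))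

/-- `trim(a)`: for a type-2 degenerate cherry `{a}` (sole leaf whose parent `p` is
a reticulation vertex with distinct parents `q₁, q₂`), delete the arc `(q₁,p)`
(case (a): there is a vertex `q` with arcs `(q,q₁)`, `(q,q₂)`, `(q₁,q₂)`),
respectively one of the two parallel arcs from `q` to `q₂` (case (b): there is an
arc `(q₁,q)` and a pair of parallel arcs from `q` to `q₂`), suppressing the two
resulting degree-two vertices. -/
def TrimOp (G G' : Net) : Prop :=
  ∃ a p g0, IsLeafN G a ∧ (∀ w, IsLeafN G w → w = a) ∧ IsReticN G p ∧ ArcFT G g0 p a ∧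
   ((∃ q q1 q2 f1 f2 f3 g1 g2,
      ArcFT G g1 q1 p ∧ ArcFT G g2 q2 p ∧ g1 ≠ g2 ∧ q1 ≠ q2 ∧
      ArcFT G f1 q q1 ∧ ArcFT G f2 q q2 ∧ ArcFT G f3 q1 q2 ∧
      G'.verts = (G.verts.erase q1).erase p ∧
      G'.arcs = ((G.arcs.erase g1).erase f3).erase g0 ∧
      (∀ e ∈ G'.arcs, e ≠ f1 → e ≠ g2 → G'.src e = G.src e ∧ G'.tgt e = G.tgt e) ∧
      G'.src f1 = q ∧ G'.tgt f1 = q2 ∧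
      G'.src g2 = q2 ∧ G'.tgt g2 = a) ∨
    (∃ q q1 q2 eq' f1 f2 g1 g2,
      ArcFT G g1 q1 p ∧ ArcFT G g2 q2 p ∧ g1 ≠ g2 ∧ q1 ≠ q2 ∧
      ArcFT G eq' q1 q ∧ ArcFT G f1 q q2 ∧ ArcFT G f2 q q2 ∧ f1 ≠ f2 ∧
      G'.verts = (G.verts.erase q).erase q2 ∧
      G'.arcs = ((G.arcs.erase f2).erase f1).erase g2 ∧
      (∀ e ∈ G'.arcs, e ≠ eq' → G'.src e = G.src e ∧ G'.tgt e = G.tgt e) ∧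
      G'.src eq' = q1 ∧ G'.tgt eq' = p))

/-- A single cherry modification operation: reduce, cut or simp. -/
def CherryModOp (G G' : Net) : Prop := ReduceOp G G' ∨ CutOp G G' ∨ SimpOp G G'

/-- A single weak cherry modification operation: reduce, cut, simp or trim. -/
def WeakCherryModOp (G G' : Net) : Prop := CherryModOp G G' ∨ TrimOp G G'

/-- The network consisting of a single vertex (and no arcs). -/
def IsSingleV (G : Net) : Prop := ∃ v, G.verts = {v} ∧ G.arcs = ∅

/-- `G` admits a complete cherry modification sequence, i.e. `G` is an orchard. -/
def IsOrchardN (G : Net) : Prop :=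
  ∃ G', Relation.ReflTransGen CherryModOp G G' ∧ IsSingleV G'

/-- `G` admits a complete weak cherry modification sequence, i.e. `G` is a weak
orchard. -/
def IsWeakOrchardN (G : Net) : Prop :=
  ∃ G', Relation.ReflTransGen WeakCherryModOp G G' ∧ IsSingleV G'

/-! ### The traceback through the simplification sequence -/

/-- Traceback step in case `α = 0`: replace the leaf indexing the first component
of `m''` by a cherry on two new leaves. -/
def CherryExpandOp (R'' R' : LNet) : Prop :=
  ∃ y1 y2 b1 b2,
    y1 ∉ R''.net.verts ∧ y2 ∉ R''.net.verts ∧ y1 ≠ y2 ∧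
    b1 ∉ R''.net.arcs ∧ b2 ∉ R''.net.arcs ∧ b1 ≠ b2 ∧
    R'.net.verts = R''.net.verts ∪ {y1, y2} ∧
    R'.net.arcs = R''.net.arcs ∪ {b1, b2} ∧
    (∀ a ∈ R''.net.arcs, R'.net.src a = R''.net.src a ∧ R'.net.tgt a = R''.net.tgt a) ∧
    R'.net.src b1 = R''.leaf 0 ∧ R'.net.tgt b1 = y1 ∧
    R'.net.src b2 = R''.leaf 0 ∧ R'.net.tgt b2 = y2 ∧
    R'.leaf 0 = y1 ∧ R'.leaf 1 = y2 ∧ (∀ i, 1 ≤ i → R'.leaf (i + 1) = R''.leaf i)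

/-- Traceback step in case `α > m₂'`: subdivide the incoming arcs of the leaves
indexing the first and second components of `m''` by new vertices `u` and `v` and
add the arc `(v,u)`. -/
def AddArcOp (R'' R' : LNet) : Prop :=
  ∃ u v a0 a1 b0 b1 c,
    u ∉ R''.net.verts ∧ v ∉ R''.net.verts ∧ u ≠ v ∧
    a0 ∈ R''.net.arcs ∧ R''.net.tgt a0 = R''.leaf 0 ∧
    a1 ∈ R''.net.arcs ∧ R''.net.tgt a1 = R''.leaf 1 ∧ a0 ≠ a1 ∧
    b0 ∉ R''.net.arcs ∧ b1 ∉ R''.net.arcs ∧ c ∉ R''.net.arcs ∧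
    b0 ≠ b1 ∧ b0 ≠ c ∧ b1 ≠ c ∧
    R'.net.verts = R''.net.verts ∪ {u, v} ∧
    R'.net.arcs = R''.net.arcs ∪ {b0, b1, c} ∧
    (∀ a ∈ R''.net.arcs, a ≠ a0 → a ≠ a1 →
        R'.net.src a = R''.net.src a ∧ R'.net.tgt a = R''.net.tgt a) ∧
    R'.net.src a0 = R''.net.src a0 ∧ R'.net.tgt a0 = u ∧
    R'.net.src a1 = R''.net.src a1 ∧ R'.net.tgt a1 = v ∧
    R'.net.src b0 = u ∧ R'.net.tgt b0 = R''.leaf 0 ∧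
    R'.net.src b1 = v ∧ R'.net.tgt b1 = R''.leaf 1 ∧
    R'.net.src c = v ∧ R'.net.tgt c = u ∧
    (∀ i, R'.leaf i = R''.leaf i)

/-- Traceback step in case `0 < α ≤ m₂'`, where the inserted component `α` sits at
(0-based) position `j` of `m''`: subdivide the incoming arc of the leaf indexing
`α` by a vertex `v`, replace the leaf indexing the first component of `m''` by a
cherry, subdivide the incoming arc of one of the two new cherry leaves by a vertex
`u`, add the arc `(v,u)` and delete the leaf indexing `α` together with its
incoming arc, suppressing the resulting degree-two vertex. -/
def InsertBackOp (j : ℕ) (R'' R' : LNet) : Prop :=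
  ∃ u y1 y2 c1 c2 c3 az,
    u ∉ R''.net.verts ∧ y1 ∉ R''.net.verts ∧ y2 ∉ R''.net.verts ∧
    u ≠ y1 ∧ u ≠ y2 ∧ y1 ≠ y2 ∧
    c1 ∉ R''.net.arcs ∧ c2 ∉ R''.net.arcs ∧ c3 ∉ R''.net.arcs ∧
    c1 ≠ c2 ∧ c1 ≠ c3 ∧ c2 ≠ c3 ∧
    az ∈ R''.net.arcs ∧ R''.net.tgt az = R''.leaf j ∧
    R'.net.verts = (R''.net.verts.erase (R''.leaf j)) ∪ {u, y1, y2} ∧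
    R'.net.arcs = R''.net.arcs ∪ {c1, c2, c3} ∧
    (∀ a ∈ R''.net.arcs, a ≠ az →
        R'.net.src a = R''.net.src a ∧ R'.net.tgt a = R''.net.tgt a) ∧
    R'.net.src az = R''.net.src az ∧ R'.net.tgt az = u ∧
    R'.net.src c1 = R''.leaf 0 ∧ R'.net.tgt c1 = u ∧
    R'.net.src c2 = u ∧ R'.net.tgt c2 = y1 ∧
    R'.net.src c3 = R''.leaf 0 ∧ R'.net.tgt c3 = y2 ∧
    R'.leaf 0 = y1 ∧ R'.leaf 1 = y2 ∧
    (∀ i, 1 ≤ i → i < j → R'.leaf (i + 1) = R''.leaf i) ∧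
    (∀ i, j < i → R'.leaf i = R''.leaf i)

/-- One step of the traceback: `R'` is a realization of the non-simple profile `m'`
obtained from the realization `R''` of `simpStep m'` by the surgery dictated by the
case (`α = 0`, `α > m₂'` or `0 < α ≤ m₂'`) that produced `simpStep m'` from `m'`. -/
def TraceStep (m' : List ℕ) (R'' R' : LNet) : Prop :=
  2 ≤ m'.length ∧ ¬ IsSimpleP m' ∧
  ((m'.headI = m'.tail.headI ∧ CherryExpandOp R'' R') ∨
   (m'.tail.headI < m'.headI - m'.tail.headI ∧ AddArcOp R'' R') ∨
   (0 < m'.headI - m'.tail.headI ∧ m'.headI - m'.tail.headI ≤ m'.tail.headI ∧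
     InsertBackOp
       ((m'.tail.takeWhile fun y => decide (m'.headI - m'.tail.headI ≤ y)).length)
       R'' R'))

/-- `TracebackFrom core m N`: `N` is a network `N(m)` obtainable by the traceback
through the simplification sequence of `m`, initialized with the core network
`core`. -/
inductive TracebackFrom (core : LNet) : List ℕ → LNet → Prop
  | base (m : List ℕ) : IsSimpleP m → TracebackFrom core m core
  | step (m' : List ℕ) (R'' R' : LNet) :
      TracebackFrom core (simpStep m') R'' → TraceStep m' R'' R' →
      TracebackFrom core m' R'

/-! ### Tree-based and tree-child networks -/

def subIn (G : Net) (A : Finset ℕ) (v : ℕ) : ℕ := (A.filter fun a => G.tgt a = v).card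
def subOut (G : Net) (A : Finset ℕ) (v : ℕ) : ℕ := (A.filter fun a => G.src a = v).card

/-- `G` is tree-based: some subset `A` of its arcs forms a spanning subdivision of a
rooted phylogenetic tree (with one extra incoming arc added to its root) whose
leaves are exactly the leaves of `G`; all remaining arcs of `G` join subdivision
vertices, and every subdivision vertex has total degree 3 in `G`. -/
def IsTreeBased (G : Net) : Prop :=
  ∃ A : Finset ℕ, A ⊆ G.arcs ∧
    (∃! r, r ∈ G.verts ∧ subIn G A r = 0) ∧
    (∀ r ∈ G.verts, subIn G A r = 0 → subOut G A r = 1) ∧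
    (∀ v ∈ G.verts,
        (subIn G A v = 0 ∧ subOut G A v = 1) ∨ (subIn G A v = 1 ∧ subOut G A v = 0) ∨
        (subIn G A v = 1 ∧ subOut G A v = 1) ∨ (subIn G A v = 1 ∧ subOut G A v = 2)) ∧
    (∀ v ∈ G.verts, subIn G A v = 1 → subOut G A v = 0 → IsLeafN G v) ∧
    (∀ v, IsLeafN G v → subIn G A v = 1 ∧ subOut G A v = 0) ∧
    (∀ a ∈ G.arcs, a ∉ A →
        subIn G A (G.src a) = 1 ∧ subOut G A (G.src a) = 1 ∧
        subIn G A (G.tgt a) = 1 ∧ subOut G A (G.tgt a) = 1) ∧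
    (∀ v ∈ G.verts, subIn G A v = 1 → subOut G A v = 1 → inDeg G v + outDeg G v = 3)

/-- `G` is tree-child (reticulation vertices contained in beads being ignored):
every vertex has a directed path to a leaf on which every vertex except possibly
the first one is either not a reticulation vertex or is contained in a bead. -/
def IsTreeChild (G : Net) : Prop :=
  ∀ v ∈ G.verts, ∃ (l : List ℕ) (w : ℕ), IsWalk G l v w ∧ IsLeafN G w ∧
    ∀ a ∈ l, IsReticN G (G.tgt a) → InBead G (G.tgt a)

/-! ### Multiple-labelled networks and the split operation -/

/-- A multiple-labelled network: a network together with a labelling map assigning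
to each leaf vertex the (0-based) position of the profile component it is labelled
with; distinct leaves may carry the same label. -/
structure MLNet where
  net : Net
  lab : ℕ → ℕ

/-- A multiple-labelled tree: a multiple-labelled network without reticulation
vertices. -/
def IsMLTree (R : MLNet) : Prop := ∀ v, ¬ IsReticN R.net v

/-- The multiple-labelled network `R` realizes the ploidy profile `m`: for every
position `i` of `m`, the total number of directed paths from the root to leaves
labelled `i` equals the `i`-th component of `m`. -/
def MLRealizes (R : MLNet) (m : List ℕ) : Prop :=
  IsPhylo R.net ∧
  (∀ v, IsLeafN R.net v → R.lab v < m.length) ∧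
  (∀ i < m.length, ∀ r, IsRootN R.net r →
      (∑ v ∈ R.net.verts.filter (fun v => IsLeafN R.net v ∧ R.lab v = i),
          nPaths R.net r v) = m.getD i 0)

/-- The arcs of the subgraph induced by the vertices below `c`. -/
def arcsBelow (G : Net) (c : ℕ) : Set ℕ :=
  {b | b ∈ G.arcs ∧ BelowV G c (G.src b) ∧ BelowV G c (G.tgt b)}

/-- `a` is a cut-arc of `G`: removing it disconnects its end vertices in the
underlying undirected graph. -/
def IsCutArc (G : Net) (a : ℕ) : Prop :=
  a ∈ G.arcs ∧
    ¬ Relation.ReflTransGen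
        (fun x y => ∃ b ∈ G.arcs, b ≠ a ∧
          ((G.src b = x ∧ G.tgt b = y) ∨ (G.src b = y ∧ G.tgt b = x)))
        (G.src a) (G.tgt a)

/-- The split operation: `R'` is obtained from `R` by deleting a reticulation
vertex `h` (with parents `p₁, p₂` and child `c`, where `(h,c)` is a cut-arc)
together with its three incident arcs, making a disjoint copy (via `φ` on vertices
and `ψ` on arcs) of the subgraph induced by the vertices below `c`, and attaching
one copy of `c` to `p₁` by an arc `(p₁,c)` and the other to `p₂` by an arc
`(p₂,c)`. -/
def SplitRel (R R' : MLNet) : Prop :=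
  ∃ (h p1 p2 c a0 a1 a2 : ℕ) (φ ψ : ℕ → ℕ),
    IsReticN R.net h ∧
    ArcFT R.net a0 h c ∧ IsCutArc R.net a0 ∧
    ArcFT R.net a1 p1 h ∧ ArcFT R.net a2 p2 h ∧
    a1 ≠ a2 ∧ a0 ≠ a1 ∧ a0 ≠ a2 ∧
    Set.InjOn φ {w | BelowV R.net c w} ∧
    (∀ w, BelowV R.net c w → φ w ∉ R.net.verts) ∧
    Set.InjOn ψ (arcsBelow R.net c) ∧
    (∀ b ∈ arcsBelow R.net c, ψ b ∉ R.net.arcs) ∧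
    (↑R'.net.verts : Set ℕ) =
      ((↑R.net.verts : Set ℕ) \ {h}) ∪ (φ '' {w | BelowV R.net c w}) ∧
    (↑R'.net.arcs : Set ℕ) =
      ((↑R.net.arcs : Set ℕ) \ {a0}) ∪ (ψ '' arcsBelow R.net c) ∧
    (∀ b ∈ R.net.arcs, b ≠ a0 → b ≠ a1 → b ≠ a2 →
        R'.net.src b = R.net.src b ∧ R'.net.tgt b = R.net.tgt b) ∧
    R'.net.src a1 = p1 ∧ R'.net.tgt a1 = c ∧
    R'.net.src a2 = p2 ∧ R'.net.tgt a2 = φ c ∧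
    (∀ b ∈ arcsBelow R.net c,
        R'.net.src (ψ b) = φ (R.net.src b) ∧ R'.net.tgt (ψ b) = φ (R.net.tgt b)) ∧
    (∀ v ∈ R.net.verts, v ≠ h → R'.lab v = R.lab v) ∧
    (∀ w, BelowV R.net c w → R'.lab (φ w) = R.lab w)

/-- Adjacency in ploidy profile space `𝒫(m)` (relative to an edit distance `D` on
multiple-labelled trees): both endpoints realize `m` and either one is obtained
from the other by a single split operation, or both are multiple-labelled trees at
`D`-distance 1. -/
def PEdge (m : List ℕ) (D : MLNet → MLNet → ℕ) (A B : MLNet) : Prop :=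
  MLRealizes A m ∧ MLRealizes B m ∧
    (SplitRel A B ∨ SplitRel B A ∨ (IsMLTree A ∧ IsMLTree B ∧ D A B = 1))


/-!
Simplifying `(2^n, …, 2, 1)` alternates `(2^(k+1), 2^k, …, 1) ↦ (2^k, 2^k, …, 1) ↦
(2^k, …, 1)` and ends at `(2, 1)`. Tracing back such a pair of steps replaces the leaf `z`
indexing the first component by the gadget `z → y, z → u, y → u, u → x₁, y → x₂`, and
`B((2, 1))` is this gadget itself, rooted at `z`. All old vertices other than `z` keep their
degrees, the only new reticulation `u` is followed by the leaf `x₁`, and a path that ended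
at `z` goes on through the tree vertex `y` to the leaf `x₂`; so every traceback network is
tree-child.
Chaining `n` gadgets also gives a tree-child realization directly: the number of paths
doubles across each gadget.
-/

def ArcsInVerts (G : Net) : Prop := ∀ a ∈ G.arcs, G.src a ∈ G.verts ∧ G.tgt a ∈ G.verts

def inArcs (G : Net) (v : ℕ) : Finset ℕ := G.arcs.filter fun a => G.tgt a = v

def outArcs (G : Net) (v : ℕ) : Finset ℕ := G.arcs.filter fun a => G.src a = v

section Walks

variable {G : Net}

lemma isWalk_concat_iff (hG : ArcsInVerts G) {a : ℕ} :
    ∀ {l : List ℕ} {u v : ℕ},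
      IsWalk G (l ++ [a]) u v ↔ IsWalk G l u (G.src a) ∧ a ∈ G.arcs ∧ G.tgt a = v
  | [], u, v => by
    simp only [IsWalk, List.nil_append]
    constructor
    · rintro ⟨ha, rfl, rfl, -⟩
      exact ⟨⟨rfl, (hG a ha).1⟩, ha, rfl⟩
    · rintro ⟨⟨rfl, -⟩, ha, rfl⟩
      exact ⟨ha, rfl, rfl, (hG a ha).2⟩
  | b :: l, u, v => by
    simp only [List.cons_append, IsWalk, isWalk_concat_iff hG, and_assoc]

lemma IsWalk.le_of_src_lt_tgt (hlt : ∀ a ∈ G.arcs, G.src a < G.tgt a) :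
    ∀ {l : List ℕ} {u v : ℕ}, IsWalk G l u v → u ≤ v
  | [], _, _, h => h.1.le
  | a :: _, _, _, h => h.2.1 ▸ (hlt a h.1).le.trans (h.2.2.le_of_src_lt_tgt hlt)

lemma IsWalk.eq_nil_of_src_lt_tgt (hlt : ∀ a ∈ G.arcs, G.src a < G.tgt a) {l : List ℕ}
    {u : ℕ} (h : IsWalk G l u u) : l = [] := by
  cases l with
  | nil => rfl
  | cons a l => exact absurd (h.2.1 ▸ hlt a h.1) (h.2.2.le_of_src_lt_tgt hlt).not_gt

lemma setOf_isWalk_self (hlt : ∀ a ∈ G.arcs, G.src a < G.tgt a) {u : ℕ} (hu : u ∈ G.verts) :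
    {l | IsWalk G l u u} = {[]} := by
  ext l
  refine ⟨fun h => h.eq_nil_of_src_lt_tgt hlt, ?_⟩
  rintro rfl
  exact ⟨rfl, hu⟩

lemma setOf_isWalk_eq_biUnion (hG : ArcsInVerts G) {u v : ℕ} (huv : u ≠ v) :
    {l | IsWalk G l u v} =
      ⋃ a ∈ (inArcs G v : Set ℕ),
        (· ++ [a]) '' {l | IsWalk G l u (G.src a)} := by
  ext l
  simp only [inArcs, Set.mem_ofPred_eq, Set.mem_iUnion, Set.mem_image, Finset.coe_filter]
  constructor
  · intro h
    rcases l.eq_nil_or_concat' with rfl | ⟨l, a, rfl⟩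
    · exact absurd h.1 huv
    · obtain ⟨hl, ha, rfl⟩ := (isWalk_concat_iff hG).1 h
      exact ⟨a, ⟨ha, rfl⟩, l, hl, rfl⟩
  · rintro ⟨a, ⟨ha, rfl⟩, l, hl, rfl⟩
    exact (isWalk_concat_iff hG).2 ⟨hl, ha, rfl⟩

lemma encard_setOf_isWalk (hG : ArcsInVerts G) {u v : ℕ} (huv : u ≠ v) :
    {l | IsWalk G l u v}.encard =
      ∑ a ∈ inArcs G v, {l | IsWalk G l u (G.src a)}.encard := by
  rw [setOf_isWalk_eq_biUnion hG huv, (Finset.finite_toSet _).encard_biUnion,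
    finsum_mem_coe_finset]
  · exact Finset.sum_congr rfl fun a _ => List.append_left_injective [a] |>.encard_image _
  · rintro a - b - hab
    refine Set.disjoint_left.2 ?_
    rintro _ ⟨l, -, rfl⟩ ⟨l', -, h⟩
    exact hab (by simpa using (List.append_inj' h rfl).2.symm)

lemma encard_setOf_isWalk_of_inArcs_eq_singleton (hG : ArcsInVerts G) {u v a : ℕ}
    (huv : u ≠ v) (h : inArcs G v = {a}) :
    {l | IsWalk G l u v}.encard = {l | IsWalk G l u (G.src a)}.encard := by
  rw [encard_setOf_isWalk hG huv, h, Finset.sum_singleton]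

end Walks

section TreeChild

variable {G N : Net}

def HasTreeChildPath (G : Net) (v : ℕ) : Prop :=
  ∃ (l : List ℕ) (w : ℕ), IsWalk G l v w ∧ IsLeafN G w ∧
    ∀ a ∈ l, IsReticN G (G.tgt a) → InBead G (G.tgt a)

lemma IsLeafN.hasTreeChildPath {v : ℕ} (h : IsLeafN G v) : HasTreeChildPath G v :=
  ⟨[], v, ⟨rfl, h.1⟩, h, by simp⟩

lemma HasTreeChildPath.of_arc {a v w : ℕ} (ha : a ∈ G.arcs) (hsrc : G.src a = v)
    (htgt : G.tgt a = w) (hret : IsReticN G w → InBead G w) (h : HasTreeChildPath G w) :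
    HasTreeChildPath G v := by
  obtain ⟨l, x, hl, hleaf, hgood⟩ := h
  refine ⟨a :: l, x, ⟨ha, hsrc, htgt ▸ hl⟩, hleaf, ?_⟩
  rintro b (_ | ⟨_, hb⟩)
  exacts [htgt ▸ hret, hgood b hb]

lemma IsLeafN.not_isReticN {v : ℕ} (h : IsLeafN G v) : ¬ IsReticN G v :=
  fun hr => by have := h.2.2; have := hr.2.2; omega

lemma inDeg_eq_zero_of_notMem (hG : ArcsInVerts G) {v : ℕ} (hv : v ∉ G.verts) :
    inDeg G v = 0 :=
  Finset.card_eq_zero.2 <| Finset.filter_eq_empty_iff.2 fun a ha h => hv (h ▸ (hG a ha).2)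

lemma outDeg_eq_zero_of_notMem (hG : ArcsInVerts G) {v : ℕ} (hv : v ∉ G.verts) :
    outDeg G v = 0 :=
  Finset.card_eq_zero.2 <| Finset.filter_eq_empty_iff.2 fun a ha h => hv (h ▸ (hG a ha).1)

structure IsGraft (G N : Net) (B : Finset ℕ) (z : ℕ) : Prop where
  verts_subset : G.verts ⊆ N.verts
  arcs_eq : N.arcs = G.arcs ∪ B
  disjoint : Disjoint G.arcs B
  src_eq : ∀ a ∈ G.arcs, N.src a = G.src a
  tgt_eq : ∀ a ∈ G.arcs, N.tgt a = G.tgt a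
  tgt_notMem : ∀ a ∈ B, N.tgt a ∉ G.verts
  src_eq_of_mem : ∀ a ∈ B, N.src a ∈ G.verts → N.src a = z

namespace IsGraft

variable {B : Finset ℕ} {z : ℕ} (h : IsGraft G N B z)
include h

lemma inDeg_eq (v : ℕ) :
    inDeg N v = inDeg G v + (B.filter fun a => N.tgt a = v).card := by
  rw [inDeg, inDeg, h.arcs_eq, Finset.filter_union,
    Finset.card_union_of_disjoint (h.disjoint.mono (Finset.filter_subset _ _)
      (Finset.filter_subset _ _)),
    Finset.filter_congr fun a ha => by rw [h.tgt_eq a ha]]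

lemma outDeg_eq (v : ℕ) :
    outDeg N v = outDeg G v + (B.filter fun a => N.src a = v).card := by
  rw [outDeg, outDeg, h.arcs_eq, Finset.filter_union,
    Finset.card_union_of_disjoint (h.disjoint.mono (Finset.filter_subset _ _)
      (Finset.filter_subset _ _)),
    Finset.filter_congr fun a ha => by rw [h.src_eq a ha]]

lemma inDeg_eq_of_mem {v : ℕ} (hv : v ∈ G.verts) : inDeg N v = inDeg G v := by
  rw [h.inDeg_eq, Finset.card_eq_zero.2, add_zero]
  exact Finset.filter_eq_empty_iff.2 fun a ha hav => h.tgt_notMem a ha (hav ▸ hv)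

lemma outDeg_eq_of_mem {v : ℕ} (hv : v ∈ G.verts) (hvz : v ≠ z) :
    outDeg N v = outDeg G v := by
  rw [h.outDeg_eq, Finset.card_eq_zero.2, add_zero]
  exact Finset.filter_eq_empty_iff.2 fun a ha hav =>
    hvz (hav ▸ h.src_eq_of_mem a ha (hav ▸ hv))

lemma inBead {v : ℕ} (hv : InBead G v) : InBead N v := by
  obtain ⟨a, b, ha, hb, hab, hs, ht, hv⟩ := hv
  refine ⟨a, b, h.arcs_eq ▸ Finset.mem_union_left _ ha,
    h.arcs_eq ▸ Finset.mem_union_left _ hb, hab, ?_, ?_, ?_⟩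
  · rwa [h.src_eq a ha, h.src_eq b hb]
  · rwa [h.tgt_eq a ha, h.tgt_eq b hb]
  · rwa [h.src_eq a ha, h.tgt_eq a ha]

lemma isLeafN {v : ℕ} (hvz : v ≠ z) (hv : IsLeafN G v) : IsLeafN N v :=
  ⟨h.verts_subset hv.1, (h.inDeg_eq_of_mem hv.1).trans hv.2.1,
    (h.outDeg_eq_of_mem hv.1 hvz).trans hv.2.2⟩

lemma isReticN_of_isReticN (hz : IsLeafN G z) {v : ℕ} (hv : v ∈ G.verts)
    (hret : IsReticN N v) : IsReticN G v := by
  have hin : inDeg G v = 2 := (h.inDeg_eq_of_mem hv).symm.trans hret.2.1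
  have hvz : v ≠ z := by rintro rfl; have := hz.2.1; omega
  exact ⟨hv, hin, (h.outDeg_eq_of_mem hv hvz).symm.trans hret.2.2⟩

lemma hasTreeChildPath (hG : ArcsInVerts G) (hz : IsLeafN G z)
    (hzN : HasTreeChildPath N z) {v : ℕ} (hv : HasTreeChildPath G v) :
    HasTreeChildPath N v := by
  obtain ⟨l, w, hw, hleaf, hgood⟩ := hv
  induction l generalizing v with
  | nil =>
    obtain ⟨rfl, -⟩ := hw
    rcases eq_or_ne v z with rfl | hvz
    exacts [hzN, (h.isLeafN hvz hleaf).hasTreeChildPath]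
  | cons a l ih =>
    obtain ⟨ha, rfl, hw⟩ := hw
    refine .of_arc (h.arcs_eq ▸ Finset.mem_union_left _ ha) (h.src_eq a ha) (h.tgt_eq a ha)
      (fun hret => h.inBead ?_) (ih hw fun b hb => hgood b (List.mem_cons_of_mem a hb))
    exact hgood a List.mem_cons_self (h.isReticN_of_isReticN hz (hG a ha).2 hret)

lemma isTreeChild (hG : ArcsInVerts G) (htc : IsTreeChild G) (hz : IsLeafN G z)
    (hnew : ∀ v ∈ N.verts, v ∉ G.verts ∨ v = z → HasTreeChildPath N v) :
    IsTreeChild N := by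
  intro v hv
  by_cases hvG : v ∈ G.verts
  · exact h.hasTreeChildPath hG hz (hnew z (h.verts_subset hz.1) (.inr rfl)) (htc v hvG)
  · exact hnew v hv (.inl hvG)

end IsGraft

end TreeChild

structure IsGadgetGraft (G N : Net) (z y u x₁ x₂ b₁ b₂ c₁ c₂ c₃ : ℕ) : Prop
    extends IsGraft G N {b₁, b₂, c₁, c₂, c₃} z where
  verts_eq : N.verts = G.verts ∪ {y, u, x₁, x₂}
  src_b₁ : N.src b₁ = z
  tgt_b₁ : N.tgt b₁ = y
  src_b₂ : N.src b₂ = z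
  tgt_b₂ : N.tgt b₂ = u
  src_c₁ : N.src c₁ = y
  tgt_c₁ : N.tgt c₁ = u
  src_c₂ : N.src c₂ = u
  tgt_c₂ : N.tgt c₂ = x₁
  src_c₃ : N.src c₃ = y
  tgt_c₃ : N.tgt c₃ = x₂
  y_ne_u : y ≠ u
  y_ne_x₁ : y ≠ x₁
  y_ne_x₂ : y ≠ x₂
  u_ne_x₁ : u ≠ x₁
  u_ne_x₂ : u ≠ x₂
  x₁_ne_x₂ : x₁ ≠ x₂

namespace IsGadgetGraft

variable {G N : Net} {z y u x₁ x₂ b₁ b₂ c₁ c₂ c₃ : ℕ}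
  (h : IsGadgetGraft G N z y u x₁ x₂ b₁ b₂ c₁ c₂ c₃)
include h

lemma mem_arcs : b₁ ∈ N.arcs ∧ b₂ ∈ N.arcs ∧ c₁ ∈ N.arcs ∧ c₂ ∈ N.arcs ∧ c₃ ∈ N.arcs := by
  simp [h.arcs_eq]

lemma mem_verts : y ∈ N.verts ∧ u ∈ N.verts ∧ x₁ ∈ N.verts ∧ x₂ ∈ N.verts := by
  simp [h.verts_eq]

lemma notMem_verts : y ∉ G.verts ∧ u ∉ G.verts ∧ x₁ ∉ G.verts ∧ x₂ ∉ G.verts := by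
  refine ⟨h.tgt_b₁ ▸ ?_, h.tgt_b₂ ▸ ?_, h.tgt_c₂ ▸ ?_, h.tgt_c₃ ▸ ?_⟩ <;>
    exact h.tgt_notMem _ (by simp)

lemma isLeafN_x₁ (hG : ArcsInVerts G) (hz : z ∈ G.verts) : IsLeafN N x₁ := by
  have hx₁ := h.notMem_verts.2.2.1
  have hzx : z ≠ x₁ := fun e => hx₁ (e ▸ hz)
  refine ⟨h.mem_verts.2.2.1, ?_, ?_⟩
  · rw [h.inDeg_eq, inDeg_eq_zero_of_notMem hG hx₁]
    simp [Finset.filter_insert, Finset.filter_singleton, h.tgt_b₁, h.tgt_b₂, h.tgt_c₁,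
      h.tgt_c₂, h.tgt_c₃, h.y_ne_x₁, h.u_ne_x₁, h.x₁_ne_x₂.symm]
  · rw [h.outDeg_eq, outDeg_eq_zero_of_notMem hG hx₁]
    simp [Finset.filter_insert, Finset.filter_singleton, h.src_b₁, h.src_b₂, h.src_c₁,
      h.src_c₂, h.src_c₃, hzx, h.y_ne_x₁, h.u_ne_x₁]

lemma isLeafN_x₂ (hG : ArcsInVerts G) (hz : z ∈ G.verts) : IsLeafN N x₂ := by
  have hx₂ := h.notMem_verts.2.2.2
  have hzx : z ≠ x₂ := fun e => hx₂ (e ▸ hz)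
  refine ⟨h.mem_verts.2.2.2, ?_, ?_⟩
  · rw [h.inDeg_eq, inDeg_eq_zero_of_notMem hG hx₂]
    simp [Finset.filter_insert, Finset.filter_singleton, h.tgt_b₁, h.tgt_b₂, h.tgt_c₁,
      h.tgt_c₂, h.tgt_c₃, h.y_ne_x₂, h.u_ne_x₂, h.x₁_ne_x₂]
  · rw [h.outDeg_eq, outDeg_eq_zero_of_notMem hG hx₂]
    simp [Finset.filter_insert, Finset.filter_singleton, h.src_b₁, h.src_b₂, h.src_c₁,
      h.src_c₂, h.src_c₃, hzx, h.y_ne_x₂, h.u_ne_x₂]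

lemma inDeg_y (hG : ArcsInVerts G) (hz : z ∈ G.verts) : inDeg N y = 1 := by
  have hzy : z ≠ y := fun e => h.notMem_verts.1 (e ▸ hz)
  rw [h.inDeg_eq, inDeg_eq_zero_of_notMem hG h.notMem_verts.1]
  simp [Finset.filter_insert, Finset.filter_singleton, h.tgt_b₁, h.tgt_b₂, h.tgt_c₁,
    h.tgt_c₂, h.tgt_c₃, h.y_ne_u.symm, h.y_ne_x₁.symm, h.y_ne_x₂.symm]

lemma arcsInVerts (hG : ArcsInVerts G) (hz : z ∈ G.verts) : ArcsInVerts N := by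
  intro a ha
  rcases Finset.mem_union.1 (h.arcs_eq ▸ ha) with ha | ha
  · rw [h.src_eq a ha, h.tgt_eq a ha]
    exact ⟨h.verts_subset (hG a ha).1, h.verts_subset (hG a ha).2⟩
  · simp only [Finset.mem_insert, Finset.mem_singleton] at ha
    rcases ha with rfl | rfl | rfl | rfl | rfl <;>
      simp [h.src_b₁, h.tgt_b₁, h.src_b₂, h.tgt_b₂, h.src_c₁, h.tgt_c₁, h.src_c₂, h.tgt_c₂,
        h.src_c₃, h.tgt_c₃, h.verts_eq, hz]

lemma isTreeChild (hG : ArcsInVerts G) (htc : IsTreeChild G) (hz : IsLeafN G z) :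
    IsTreeChild N := by
  obtain ⟨hb₁, -, -, hc₂, hc₃⟩ := h.mem_arcs
  have hx₁ := h.isLeafN_x₁ hG hz.1
  have hx₂ := h.isLeafN_x₂ hG hz.1
  have hy : HasTreeChildPath N y :=
    .of_arc hc₃ h.src_c₃ h.tgt_c₃ (absurd · hx₂.not_isReticN) hx₂.hasTreeChildPath
  have hu : HasTreeChildPath N u :=
    .of_arc hc₂ h.src_c₂ h.tgt_c₂ (absurd · hx₁.not_isReticN) hx₁.hasTreeChildPath
  have hzN : HasTreeChildPath N z :=
    .of_arc hb₁ h.src_b₁ h.tgt_b₁ (fun hr => absurd hr.2.1 (by rw [h.inDeg_y hG hz.1]; omega))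
      hy
  refine h.toIsGraft.isTreeChild hG htc hz fun v hv hnew => ?_
  rw [h.verts_eq] at hv
  simp only [Finset.mem_union, Finset.mem_insert, Finset.mem_singleton] at hv
  rcases hnew with hvG | rfl
  · rcases hv with hv | rfl | rfl | rfl | rfl
    exacts [absurd hv hvG, hy, hu, hx₁.hasTreeChildPath, hx₂.hasTreeChildPath]
  · exact hzN

end IsGadgetGraft

def twoPows (n : ℕ) : List ℕ := (List.range (n + 1)).reverse.map (2 ^ ·)

lemma twoPows_eq_cons (n : ℕ) : twoPows n = 2 ^ n :: (List.range n).reverse.map (2 ^ ·) := by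
  simp [twoPows, List.range_succ]

lemma twoPows_succ (n : ℕ) : twoPows (n + 1) = 2 ^ (n + 1) :: twoPows n :=
  twoPows_eq_cons (n + 1)

lemma length_twoPows (n : ℕ) : (twoPows n).length = n + 1 := by simp [twoPows]

lemma getD_twoPows {n i : ℕ} (hi : i ≤ n) : (twoPows n).getD i 0 = 2 ^ (n - i) := by
  rw [List.getD_eq_getElem _ _ (by rw [length_twoPows]; omega)]
  simp only [twoPows, List.getElem_map, List.getElem_reverse, List.getElem_range,
    List.length_range, Nat.add_sub_cancel]

lemma twoPows_one : twoPows 1 = [2, 1] := rfl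

lemma not_isSimpleP_cons_twoPows_succ (a n : ℕ) : ¬ IsSimpleP (a :: twoPows (n + 1)) := by
  rintro ⟨-, -, h⟩
  have := h (2 ^ (n + 1)) (by simp [twoPows_succ])
  have := Nat.one_lt_two_pow (Nat.succ_ne_zero n)
  omega

lemma simpStep_twoPows_add_two (n : ℕ) :
    simpStep (twoPows (n + 2)) = 2 ^ (n + 1) :: twoPows (n + 1) := by
  have hns := not_isSimpleP_cons_twoPows_succ (2 ^ (n + 2)) n
  have hsub : 2 ^ (n + 2) - 2 ^ (n + 1) = 2 ^ (n + 1) := by rw [pow_succ 2 (n + 1)]; omega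
  have hlt : 2 ^ n < 2 ^ (n + 1) := Nat.pow_lt_pow_succ one_lt_two
  rw [twoPows_succ (n + 1)]
  unfold simpStep
  rw [if_neg fun h => hns ⟨List.cons_ne_nil _ _, h⟩, twoPows_succ, twoPows_eq_cons n]
  simp [hsub, insertDesc, hlt.not_ge]

lemma simpStep_cons_twoPows (n : ℕ) :
    simpStep (2 ^ (n + 1) :: twoPows (n + 1)) = twoPows (n + 1) := by
  have hns := not_isSimpleP_cons_twoPows_succ (2 ^ (n + 1)) n
  unfold simpStep
  rw [if_neg fun h => hns ⟨List.cons_ne_nil _ _, h⟩, twoPows_succ]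
  simp

lemma simpStep_iterate_twoPows (k n : ℕ) : ∃ m,
    simpStep^[k] (twoPows (n + 1)) = twoPows (m + 1) ∨
      simpStep^[k] (twoPows (n + 1)) = 2 ^ (m + 1) :: twoPows (m + 1) := by
  induction k with
  | zero => exact ⟨n, .inl rfl⟩
  | succ k ih =>
    obtain ⟨m, hm | hm⟩ := ih <;> rw [Function.iterate_succ_apply', hm]
    · rcases m with _ | m
      · exact ⟨0, .inl (by rw [twoPows_one]; decide)⟩
      · exact ⟨m, .inr (simpStep_twoPows_add_two m)⟩
    · exact ⟨m, .inl (simpStep_cons_twoPows m)⟩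

lemma IsTerminal.eq_of_twoPows {n : ℕ} {mt : List ℕ} (hn : 1 ≤ n)
    (h : IsTerminal (twoPows n) mt) : mt = [2, 1] := by
  obtain ⟨hsimple, k, rfl⟩ := h
  obtain ⟨n, rfl⟩ := Nat.exists_eq_add_of_le' hn
  obtain ⟨m, hm | hm⟩ := simpStep_iterate_twoPows k n <;> rw [hm] at hsimple ⊢
  · rcases m with _ | m
    · rfl
    · exact absurd hsimple (twoPows_succ (m + 1) ▸ not_isSimpleP_cons_twoPows_succ _ m)
  · exact absurd hsimple (not_isSimpleP_cons_twoPows_succ _ m)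

/-- Gadget `k < n` consists of the arcs `5k, …, 5k+4`, namely `4k → 4k+1`, `4k → 4k+2`,
`4k+1 → 4k+2`, `4k+1 → 4k+3` and `4k+2 → 4k+4`. -/
def gadgetChain (n : ℕ) : Net where
  verts := Finset.range (4 * n + 1)
  arcs := Finset.range (5 * n)
  src i := 4 * (i / 5) + if i % 5 ≤ 1 then 0 else if i % 5 ≤ 3 then 1 else 2
  tgt i := 4 * (i / 5) +
    if i % 5 = 0 then 1 else if i % 5 ≤ 2 then 2 else if i % 5 = 3 then 3 else 4

section GadgetChain

variable {n : ℕ}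

lemma gadgetChain_src_eq_iff {i v : ℕ} : (gadgetChain n).src i = v ↔
    (i % 5 ≤ 1 ∧ v = 4 * (i / 5)) ∨ (2 ≤ i % 5 ∧ i % 5 ≤ 3 ∧ v = 4 * (i / 5) + 1) ∨
      (i % 5 = 4 ∧ v = 4 * (i / 5) + 2) := by
  simp only [gadgetChain]
  split_ifs <;> omega

lemma gadgetChain_tgt_eq_iff {i v : ℕ} : (gadgetChain n).tgt i = v ↔
    (i % 5 = 0 ∧ v = 4 * (i / 5) + 1) ∨ (1 ≤ i % 5 ∧ i % 5 ≤ 2 ∧ v = 4 * (i / 5) + 2) ∨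
      (i % 5 = 3 ∧ v = 4 * (i / 5) + 3) ∨ (i % 5 = 4 ∧ v = 4 * (i / 5) + 4) := by
  simp only [gadgetChain]
  split_ifs <;> omega

lemma gadgetChain_arcs : (gadgetChain n).arcs = Finset.range (5 * n) := rfl

lemma gadgetChain_verts : (gadgetChain n).verts = Finset.range (4 * n + 1) := rfl

lemma gadgetChain_src_lt_tgt : ∀ a ∈ (gadgetChain n).arcs,
    (gadgetChain n).src a < (gadgetChain n).tgt a := by
  intro a _
  have := gadgetChain_src_eq_iff.1 (rfl : (gadgetChain n).src a = _)
  have := gadgetChain_tgt_eq_iff.1 (rfl : (gadgetChain n).tgt a = _)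
  omega

lemma arcsInVerts_gadgetChain : ArcsInVerts (gadgetChain n) := by
  intro a ha
  have ha : a < 5 * n := Finset.mem_range.1 ha
  have := gadgetChain_src_eq_iff.1 (rfl : (gadgetChain n).src a = _)
  have := gadgetChain_tgt_eq_iff.1 (rfl : (gadgetChain n).tgt a = _)
  exact ⟨Finset.mem_range.2 (by omega), Finset.mem_range.2 (by omega)⟩

lemma gadgetChain_inArcs_zero : inArcs (gadgetChain n) 0 = ∅ := by
  ext i; simp [inArcs, gadgetChain_tgt_eq_iff]

lemma gadgetChain_inArcs_four_mul_add_one {k : ℕ} (hk : k < n) :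
    inArcs (gadgetChain n) (4 * k + 1) = {5 * k} := by
  ext i; simp [inArcs, gadgetChain_arcs, gadgetChain_tgt_eq_iff]; omega

lemma gadgetChain_inArcs_four_mul_add_two {k : ℕ} (hk : k < n) :
    inArcs (gadgetChain n) (4 * k + 2) = {5 * k + 1, 5 * k + 2} := by
  ext i; simp [inArcs, gadgetChain_arcs, gadgetChain_tgt_eq_iff]; omega

lemma gadgetChain_inArcs_four_mul_add_three {k : ℕ} (hk : k < n) :
    inArcs (gadgetChain n) (4 * k + 3) = {5 * k + 3} := by
  ext i; simp [inArcs, gadgetChain_arcs, gadgetChain_tgt_eq_iff]; omega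

lemma gadgetChain_inArcs_four_mul_add_four {k : ℕ} (hk : k < n) :
    inArcs (gadgetChain n) (4 * k + 4) = {5 * k + 4} := by
  ext i; simp [inArcs, gadgetChain_arcs, gadgetChain_tgt_eq_iff]; omega

lemma inDeg_gadgetChain {v : ℕ} (hv : v ≤ 4 * n) :
    inDeg (gadgetChain n) v = if v = 0 then 0 else if v % 4 = 2 then 2 else 1 := by
  change (inArcs _ v).card = _
  obtain ⟨k, r, hr, rfl⟩ : ∃ k r, r < 4 ∧ v = 4 * k + r := ⟨v / 4, v % 4, by omega, by omega⟩
  interval_cases r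
  · rcases k with _ | k
    · simp [gadgetChain_inArcs_zero]
    · rw [show 4 * (k + 1) + 0 = 4 * k + 4 by ring,
        gadgetChain_inArcs_four_mul_add_four (by omega)]
      simp
  · rw [gadgetChain_inArcs_four_mul_add_one (by omega)]; simp
  · rw [gadgetChain_inArcs_four_mul_add_two (by omega), Finset.card_pair (by omega)]; simp
  · rw [gadgetChain_inArcs_four_mul_add_three (by omega)]; simp

lemma outDeg_gadgetChain {v : ℕ} (hv : v ≤ 4 * n) :
    outDeg (gadgetChain n) v =
      if v = 4 * n ∨ v % 4 = 3 then 0 else if v % 4 = 2 then 1 else 2 := by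
  change (outArcs _ v).card = _
  obtain ⟨k, r, hr, rfl⟩ : ∃ k r, r < 4 ∧ v = 4 * k + r := ⟨v / 4, v % 4, by omega, by omega⟩
  have key : ∀ s : Finset ℕ, (∀ i, i < 5 * n ∧ (gadgetChain n).src i = 4 * k + r ↔ i ∈ s) →
      (outArcs (gadgetChain n) (4 * k + r)).card = s.card := fun s hs => by
    congr 1; ext i; simp [outArcs, gadgetChain_arcs, hs]
  interval_cases r
  · rcases eq_or_ne k n with rfl | hk
    · rw [key ∅ fun i => by simp [gadgetChain_src_eq_iff]; omega]; simp
    · rw [key {5 * k, 5 * k + 1} fun i => by simp [gadgetChain_src_eq_iff]; omega,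
        Finset.card_pair (by omega)]
      simp; omega
  · rw [key {5 * k + 2, 5 * k + 3} fun i => by simp [gadgetChain_src_eq_iff]; omega,
      Finset.card_pair (by omega)]
    simp; omega
  · rw [key {5 * k + 4} fun i => by simp [gadgetChain_src_eq_iff]; omega]; simp; omega
  · rw [key ∅ fun i => by simp [gadgetChain_src_eq_iff]; omega]; simp

lemma isLeafN_gadgetChain_iff (hn : 1 ≤ n) {v : ℕ} :
    IsLeafN (gadgetChain n) v ↔ v ≤ 4 * n ∧ (v = 4 * n ∨ v % 4 = 3) := by
  simp only [IsLeafN, gadgetChain_verts, Finset.mem_range]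
  constructor
  · rintro ⟨hv, -, hout⟩
    rw [outDeg_gadgetChain (by omega)] at hout
    split_ifs at hout; omega
  · rintro ⟨hv, hv'⟩
    rw [inDeg_gadgetChain hv, outDeg_gadgetChain hv]
    split_ifs <;> omega

lemma not_isReticN_gadgetChain {v : ℕ} (hv : v % 4 ≠ 2) : ¬ IsReticN (gadgetChain n) v := by
  rintro ⟨hmem, hin, -⟩
  rw [inDeg_gadgetChain (by simp [gadgetChain_verts] at hmem; omega)] at hin
  split_ifs at hin; omega

lemma isPhylo_gadgetChain (hn : 1 ≤ n) : IsPhylo (gadgetChain n) where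
  src_mem a ha := (arcsInVerts_gadgetChain a ha).1
  tgt_mem a ha := (arcsInVerts_gadgetChain a ha).2
  no_loop a ha := (gadgetChain_src_lt_tgt a ha).ne
  acyclic _ _ hl hw := hl (hw.eq_nil_of_src_lt_tgt gadgetChain_src_lt_tgt)
  root_exu := by
    refine ⟨0, ⟨by simp [gadgetChain_verts], by simp [inDeg_gadgetChain]⟩, ?_⟩
    rintro v ⟨hv, hin⟩
    simp only [gadgetChain_verts, Finset.mem_range] at hv
    rw [inDeg_gadgetChain (by omega)] at hin
    split_ifs at hin; omega
  root_out := by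
    rintro v ⟨hv, hin⟩
    simp only [gadgetChain_verts, Finset.mem_range] at hv
    rw [inDeg_gadgetChain (by omega)] at hin
    rw [outDeg_gadgetChain (by omega)]
    split_ifs at hin ⊢ <;> omega
  types := by
    intro v hv
    simp only [IsRootN, IsLeafN, IsTreeVert, IsReticN, and_iff_right hv]
    simp only [gadgetChain_verts, Finset.mem_range] at hv
    rw [inDeg_gadgetChain (by omega), outDeg_gadgetChain (by omega)]
    split_ifs <;> omega

lemma hasTreeChildPath_gadgetChain (hn : 1 ≤ n) {v : ℕ} (hv : v ≤ 4 * n) :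
    HasTreeChildPath (gadgetChain n) v := by
  have hleaf {w : ℕ} (hw : w ≤ 4 * n) (hw' : w = 4 * n ∨ w % 4 = 3) :=
    ((isLeafN_gadgetChain_iff hn).2 ⟨hw, hw'⟩).hasTreeChildPath
  have h₁ {k : ℕ} (hk : k < n) : HasTreeChildPath (gadgetChain n) (4 * k + 1) :=
    .of_arc (a := 5 * k + 3) (w := 4 * k + 3) (Finset.mem_range.2 (by omega))
      (gadgetChain_src_eq_iff.2 (by omega)) (gadgetChain_tgt_eq_iff.2 (by omega))
      (absurd · (not_isReticN_gadgetChain (by omega)))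
      (hleaf (by omega) (by omega))
  have h₀ {k : ℕ} (hk : k ≤ n) : HasTreeChildPath (gadgetChain n) (4 * k) := by
    rcases hk.lt_or_eq with hk | rfl
    · exact .of_arc (a := 5 * k) (w := 4 * k + 1) (Finset.mem_range.2 (by omega))
        (gadgetChain_src_eq_iff.2 (by omega)) (gadgetChain_tgt_eq_iff.2 (by omega))
        (absurd · (not_isReticN_gadgetChain (by omega))) (h₁ hk)
    · exact hleaf le_rfl (.inl rfl)
  obtain ⟨k, r, hr, rfl⟩ : ∃ k r, r < 4 ∧ v = 4 * k + r := ⟨v / 4, v % 4, by omega, by omega⟩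
  interval_cases r
  · exact h₀ (by omega)
  · exact h₁ (by omega)
  · exact .of_arc (a := 5 * k + 4) (w := 4 * (k + 1)) (Finset.mem_range.2 (by omega))
      (gadgetChain_src_eq_iff.2 (by omega)) (gadgetChain_tgt_eq_iff.2 (by omega))
      (absurd · (not_isReticN_gadgetChain (by omega))) (h₀ (k := k + 1) (by omega))
  · exact hleaf hv (by omega)

lemma isTreeChild_gadgetChain (hn : 1 ≤ n) : IsTreeChild (gadgetChain n) :=
  fun _ hv =>
    hasTreeChildPath_gadgetChain hn (by simpa [gadgetChain_verts, Nat.lt_succ_iff] using hv)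

lemma encard_walks_gadgetChain_four_mul {k : ℕ} (hk : k ≤ n) :
    {l | IsWalk (gadgetChain n) l 0 (4 * k)}.encard = 2 ^ k := by
  induction k with
  | zero =>
    simp [setOf_isWalk_self gadgetChain_src_lt_tgt (by simp [gadgetChain_verts] : 0 ∈ _)]
  | succ k ih =>
    have h₁ : {l | IsWalk (gadgetChain n) l 0 (4 * k + 1)}.encard = 2 ^ k := by
      rw [encard_setOf_isWalk_of_inArcs_eq_singleton arcsInVerts_gadgetChain (by omega)
          (gadgetChain_inArcs_four_mul_add_one (by omega)),
        (gadgetChain_src_eq_iff (v := 4 * k)).2 (by omega), ih (by omega)]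
    have h₂ : {l | IsWalk (gadgetChain n) l 0 (4 * k + 2)}.encard = 2 ^ (k + 1) := by
      rw [encard_setOf_isWalk arcsInVerts_gadgetChain (by omega),
        gadgetChain_inArcs_four_mul_add_two (by omega), Finset.sum_pair (by omega),
        (gadgetChain_src_eq_iff (v := 4 * k)).2 (by omega),
        (gadgetChain_src_eq_iff (v := 4 * k + 1)).2 (by omega), ih (by omega), h₁, pow_succ,
        mul_two]
    rw [show 4 * (k + 1) = 4 * k + 4 by ring,
      encard_setOf_isWalk_of_inArcs_eq_singleton arcsInVerts_gadgetChain (by omega)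
        (gadgetChain_inArcs_four_mul_add_four (by omega)),
      (gadgetChain_src_eq_iff (v := 4 * k + 2)).2 (by omega), h₂]

lemma encard_walks_gadgetChain_four_mul_add_three {k : ℕ} (hk : k < n) :
    {l | IsWalk (gadgetChain n) l 0 (4 * k + 3)}.encard = 2 ^ k := by
  rw [encard_setOf_isWalk_of_inArcs_eq_singleton arcsInVerts_gadgetChain (by omega)
      (gadgetChain_inArcs_four_mul_add_three hk),
    (gadgetChain_src_eq_iff (v := 4 * k + 1)).2 (by omega),
    encard_setOf_isWalk_of_inArcs_eq_singleton arcsInVerts_gadgetChain (by omega)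
      (gadgetChain_inArcs_four_mul_add_one hk),
    (gadgetChain_src_eq_iff (v := 4 * k)).2 (by omega), encard_walks_gadgetChain_four_mul hk.le]

end GadgetChain

def gadgetChainLNet (n : ℕ) : LNet :=
  ⟨gadgetChain n, fun i => if i = 0 then 4 * n else 4 * (n - i) + 3⟩

lemma realizesL_gadgetChainLNet {n : ℕ} (hn : 1 ≤ n) :
    RealizesL (gadgetChainLNet n) (twoPows n) := by
  simp only [RealizesL, length_twoPows, gadgetChainLNet]
  refine ⟨isPhylo_gadgetChain hn, fun i hi => ?_, fun i j hi hj h => ?_, fun v hv => ?_,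
    fun i hi r hr => ?_⟩
  · rw [isLeafN_gadgetChain_iff hn]
    split_ifs <;> omega
  · split_ifs at h <;> omega
  · rw [isLeafN_gadgetChain_iff hn] at hv
    rcases hv with ⟨hv, rfl | hv'⟩
    · exact ⟨0, by omega, if_pos rfl⟩
    · exact ⟨n - v / 4, by omega, by rw [if_neg (by omega)]; omega⟩
  · obtain rfl : r = 0 := (isPhylo_gadgetChain hn).root_exu.unique hr
      ⟨by simp [gadgetChain_verts], by simp [inDeg_gadgetChain]⟩
    rw [getD_twoPows (by omega), nPaths, Set.ncard_def]
    split_ifs with h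
    · rw [h, encard_walks_gadgetChain_four_mul le_rfl]; simp
    · rw [encard_walks_gadgetChain_four_mul_add_three (by omega)]; simp

lemma exists_isGadgetGraft {R₀ R'' N : LNet} (hG : ArcsInVerts R₀.net)
    (hexp : CherryExpandOp R₀ R'') (hins : InsertBackOp 1 R'' N) :
    ∃ y u x₂ b₁ b₂ c₁ c₂ c₃,
      IsGadgetGraft R₀.net N.net (R₀.leaf 0) y u (N.leaf 0) x₂ b₁ b₂ c₁ c₂ c₃ := by
  obtain ⟨y₁, y₂, b₁, b₂, hy₁, hy₂, hy, hb₁, hb₂, hb, hV, hA, hold, hsb₁, htb₁, hsb₂, htb₂,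
    hl₀, hl₁, -⟩ := hexp
  obtain ⟨u, x₁, x₂, c₁, c₂, c₃, az, hu, hx₁, hx₂, hux₁, hux₂, hx, hc₁, hc₂, hc₃, hc₁₂, hc₁₃,
    hc₂₃, haz, htaz, hNV, hNA, hNold, hsaz, htaz', hsc₁, htc₁, hsc₂, htc₂, hsc₃, htc₃,
    hNl₀, -⟩ := hins
  simp only [hV, hA, Finset.mem_union, Finset.mem_insert, Finset.mem_singleton, not_or]
    at hu hx₁ hx₂ hc₁ hc₂ hc₃ haz
  rw [hl₁] at htaz hNV
  rw [hl₀] at hsc₁ hsc₃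
  -- the arc that the insertion redirects to `u` is the cherry arc `b₂ : z → y₂`
  have haz₂ : az = b₂ := by
    rcases haz with haz | rfl | rfl
    · exact absurd (htaz ▸ (hold az haz).2 ▸ (hG az haz).2) hy₂
    · exact absurd (htb₁.symm.trans htaz) hy
    · rfl
  subst haz₂
  refine ⟨y₁, u, x₂, b₁, az, c₁, c₂, c₃, ⟨⟨?_, ?_, Finset.disjoint_left.2 ?_, ?_, ?_, ?_, ?_⟩,
    ?_, ?_, ?_, ?_, ?_, ?_, ?_, ?_, ?_, ?_, ?_, ?_, ?_, ?_, ?_, ?_, ?_⟩⟩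
  all_goals grind

structure IsClosedTreeChild (R : LNet) : Prop where
  arcsInVerts : ArcsInVerts R.net
  isTreeChild : IsTreeChild R.net
  isLeafN_leaf_zero : IsLeafN R.net (R.leaf 0)

lemma IsClosedTreeChild.of_cherryExpand_insertBack {R₀ R'' N : LNet}
    (h : IsClosedTreeChild R₀) (hexp : CherryExpandOp R₀ R'') (hins : InsertBackOp 1 R'' N) :
    IsClosedTreeChild N := by
  obtain ⟨y, u, x₂, b₁, b₂, c₁, c₂, c₃, hN⟩ := exists_isGadgetGraft h.arcsInVerts hexp hins
  exact ⟨hN.arcsInVerts h.arcsInVerts h.isLeafN_leaf_zero.1,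
    hN.isTreeChild h.arcsInVerts h.isTreeChild h.isLeafN_leaf_zero,
    hN.isLeafN_x₁ h.arcsInVerts h.isLeafN_leaf_zero.1⟩

lemma isClosedTreeChild_core : IsClosedTreeChild (BLNet [2, 1]) := by
  set G := (BLNet [2, 1]).net
  have hverts : G.verts = {2, 8, 3, 0, 16} := by decide
  have hleaf : ∀ v ∈ ({0, 16} : Finset ℕ), IsLeafN G v := by decide
  have h0 := hleaf 0 (by simp)
  have h16 := hleaf 16 (by simp)
  have h8 : HasTreeChildPath G 8 := .of_arc (a := 4) (by decide) (by decide) (by decide)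
    (absurd · h16.not_isReticN) h16.hasTreeChildPath
  have h3 : HasTreeChildPath G 3 := .of_arc (a := 3) (by decide) (by decide) (by decide)
    (absurd · h0.not_isReticN) h0.hasTreeChildPath
  have h2 : HasTreeChildPath G 2 := .of_arc (a := 1) (by decide) (by decide) (by decide)
    (fun hr => absurd hr.2.2 (by decide)) h8
  refine ⟨by unfold ArcsInVerts; decide, fun v hv => ?_, h0⟩
  replace hv : v ∈ G.verts := hv
  simp only [hverts, Finset.mem_insert, Finset.mem_singleton] at hv
  rcases hv with rfl | rfl | rfl | rfl | rfl
  exacts [h2, h8, h3, h0.hasTreeChildPath, h16.hasTreeChildPath]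

lemma TraceStep.cherryExpandOp {n : ℕ} {R R' : LNet}
    (h : TraceStep (2 ^ (n + 1) :: twoPows (n + 1)) R R') : CherryExpandOp R R' := by
  obtain ⟨-, -, ⟨-, h⟩ | ⟨hlt, -⟩ | ⟨hpos, -, -⟩⟩ := h
  · exact h
  · simp [twoPows_succ] at hlt
  · simp [twoPows_succ] at hpos

lemma TraceStep.insertBackOp {n : ℕ} {R R' : LNet} (h : TraceStep (twoPows (n + 2)) R R') :
    InsertBackOp 1 R R' := by
  have hsub : 2 ^ (n + 2) - 2 ^ (n + 1) = 2 ^ (n + 1) := by rw [pow_succ 2 (n + 1)]; omega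
  have hlt : 2 ^ n < 2 ^ (n + 1) := Nat.pow_lt_pow_succ one_lt_two
  obtain ⟨-, -, ⟨heq, -⟩ | ⟨hlt', -⟩ | ⟨-, -, h⟩⟩ := h
  · simp [twoPows_succ, pow_succ 2 (n + 1)] at heq
  · simp [twoPows_succ, hsub] at hlt'
  · have htake : ((twoPows (n + 2)).tail.takeWhile fun y =>
        decide ((twoPows (n + 2)).headI - (twoPows (n + 2)).tail.headI ≤ y)).length = 1 := by
      rw [twoPows_succ (n + 1), twoPows_succ n, twoPows_eq_cons n]
      simp [hsub, hlt.not_ge]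
    rwa [htake] at h

lemma TracebackFrom.exists_of_twoPows_add_two {core N : LNet} {n : ℕ}
    (h : TracebackFrom core (twoPows (n + 2)) N) :
    ∃ R₀ R'', TracebackFrom core (twoPows (n + 1)) R₀ ∧ CherryExpandOp R₀ R'' ∧
      InsertBackOp 1 R'' N := by
  rcases h with _ | ⟨_, R'', _, h'', hstep⟩
  · exact absurd ‹_› (twoPows_succ (n + 1) ▸ not_isSimpleP_cons_twoPows_succ _ n)
  rw [simpStep_twoPows_add_two] at h''
  rcases h'' with _ | ⟨_, R₀, _, h₀, hstep₀⟩
  · exact absurd ‹_› (not_isSimpleP_cons_twoPows_succ _ n)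
  rw [simpStep_cons_twoPows] at h₀
  exact ⟨R₀, R'', h₀, hstep₀.cherryExpandOp, hstep.insertBackOp⟩

lemma IsClosedTreeChild.of_tracebackFrom {n : ℕ} (hn : 1 ≤ n) {N : LNet}
    (h : TracebackFrom (BLNet [2, 1]) (twoPows n) N) : IsClosedTreeChild N := by
  induction n, hn using Nat.le_induction generalizing N with
  | base =>
    rcases h with _ | ⟨_, _, _, -, hstep⟩
    · exact isClosedTreeChild_core
    · exact absurd (by simp [IsSimpleP, twoPows_one]) hstep.2.1
  | succ n hn ih =>
    obtain ⟨m, rfl⟩ := Nat.exists_eq_add_of_le' hn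
    obtain ⟨R₀, R'', h₀, hexp, hins⟩ := h.exists_of_twoPows_add_two
    exact (ih h₀).of_cherryExpand_insertBack hexp hins

/-- For every `n ≥ 1` the ploidy profile
`(2^n, 2^{n-1}, …, 2^0)` is tree-child; in particular every realization `N(m)` of
it obtained by the traceback initialized with the core network `B(m)` is a
tree-child phylogenetic network. -/
theorem powers_of_two_tree_child (n : ℕ) (hn : 1 ≤ n) (mt : List ℕ)
    (ht : IsTerminal ((List.range (n + 1)).reverse.map (2 ^ ·)) mt) :
    (∃ R : LNet, RealizesL R ((List.range (n + 1)).reverse.map (2 ^ ·)) ∧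
      IsTreeChild R.net) ∧
    (∀ N : LNet, TracebackFrom (BLNet mt) ((List.range (n + 1)).reverse.map (2 ^ ·)) N →
      IsTreeChild N.net) := by
  obtain rfl : mt = [2, 1] := ht.eq_of_twoPows hn
  exact ⟨⟨gadgetChainLNet n, realizesL_gadgetChainLNet hn, isTreeChild_gadgetChain hn⟩,
    fun N hN => (IsClosedTreeChild.of_tracebackFrom hn hN).isTreeChild⟩

end Ploidy
end

section
/- The ploidy profile (3) on a single-element set {x_1} is not tree-child: no phylogenetic network on {x_1} in which the number of directed paths from the root to x_1 equals 3 is tree-child. -/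
/-!
Formalization preamble for "Autopolyploidy, allopolyploidy, and phylogenetic
networks with horizontal arcs" (Huber & Maher).

Networks are finite directed multigraphs whose vertices and arcs are (finitely
many) natural numbers; parallel arcs (beads) are allowed, loops are not.
-/

namespace Ploidy

/-!
In a tree-child network whose only leaf is `v`, every vertex has a walk to `v` entering no
reticulation outside a bead. All arcs into a vertex entered by such a walk share their source,
so tracing these walks back from `v` is deterministic: two of them of equal length start at
the same vertex, and the longer of two such walks passes through the start of the shorter.
Hence, for two arcs leaving a common vertex `u`, if their targets differed, one target would
reach the other by such a walk, whose last arc would again leave `u`, closing a cycle. So the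
two root arcs form a bead, and the number of root-to-`v` paths is even, never `3`.
-/

def IsSafeWalk (G : Net) (l : List ℕ) : Prop :=
  ∀ a ∈ l, IsReticN G (G.tgt a) → InBead G (G.tgt a)

lemma IsTreeChild.exists_isSafeWalk {G : Net} (hTC : IsTreeChild G) {v : ℕ}
    (huniq : ∀ w, IsLeafN G w → w = v) :
    ∀ u ∈ G.verts, ∃ l, IsWalk G l u v ∧ IsSafeWalk G l := by
  intro u hu
  obtain ⟨l, w, hw, hleaf, hl⟩ := hTC u hu
  exact ⟨l, huniq w hleaf ▸ hw, hl⟩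

namespace IsPhylo

variable {G : Net}

lemma start_mem_of_isWalk (hphy : IsPhylo G) {l : List ℕ} {u w : ℕ} (h : IsWalk G l u w) :
    u ∈ G.verts := by
  cases l with
  | nil => exact h.2
  | cons a t => exact h.2.1 ▸ hphy.src_mem a h.1

lemma isWalk_append_iff (hphy : IsPhylo G) {l₁ l₂ : List ℕ} {u w : ℕ} :
    IsWalk G (l₁ ++ l₂) u w ↔ ∃ z, IsWalk G l₁ u z ∧ IsWalk G l₂ z w := by
  induction l₁ generalizing u with
  | nil =>
    refine ⟨fun h => ⟨u, ⟨rfl, hphy.start_mem_of_isWalk h⟩, h⟩, ?_⟩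
    rintro ⟨z, ⟨rfl, -⟩, h⟩
    exact h
  | cons a t ih =>
    simp only [List.cons_append, IsWalk, ih]
    constructor
    · rintro ⟨ha, hs, z, ht, hz⟩
      exact ⟨z, ⟨ha, hs, ht⟩, hz⟩
    · rintro ⟨z, ⟨ha, hs, ht⟩, hz⟩
      exact ⟨ha, hs, z, ht, hz⟩

lemma exists_concat_of_isWalk (hphy : IsPhylo G) {l : List ℕ} {u w : ℕ} (h : IsWalk G l u w)
    (hl : l ≠ []) :
    ∃ m b z, l = m ++ [b] ∧ IsWalk G m u z ∧ ArcFT G b z w := by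
  obtain ⟨m, b, rfl⟩ := (List.eq_nil_or_concat l).resolve_left hl
  rw [List.concat_eq_append] at h ⊢
  obtain ⟨z, hm, hb, hbz, hbw, -⟩ := hphy.isWalk_append_iff.1 h
  exact ⟨m, b, z, rfl, hm, hb, hbz, hbw⟩

lemma src_eq_of_tgt_eq (hphy : IsPhylo G) {a b : ℕ} (ha : a ∈ G.arcs) (hb : b ∈ G.arcs)
    (hab : G.tgt a = G.tgt b) (hsafe : IsReticN G (G.tgt a) → InBead G (G.tgt a)) :
    G.src a = G.src b := by
  set u := G.tgt a
  have haS : a ∈ G.arcs.filter (G.tgt · = u) := Finset.mem_filter.2 ⟨ha, rfl⟩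
  have hbS : b ∈ G.arcs.filter (G.tgt · = u) := Finset.mem_filter.2 ⟨hb, hab.symm⟩
  by_cases hret : IsReticN G u
  · -- a reticulation has outdegree 1, so it can only be the lower end of its bead
    obtain ⟨c, d, hc, hd, hcd, hsrc, htgt, hcu | hcu⟩ := hsafe hret
    · have h2 : 1 < outDeg G u := Finset.one_lt_card.2
        ⟨c, Finset.mem_filter.2 ⟨hc, hcu⟩, d, Finset.mem_filter.2 ⟨hd, hsrc ▸ hcu⟩, hcd⟩
      exact absurd hret.2.2 h2.ne'
    · have hS : G.arcs.filter (G.tgt · = u) = {c, d} := by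
        refine (Finset.eq_of_subset_of_card_le ?_ ?_).symm
        · simp only [Finset.insert_subset_iff, Finset.singleton_subset_iff, Finset.mem_filter]
          exact ⟨⟨hc, hcu⟩, hd, htgt ▸ hcu⟩
        · rw [Finset.card_pair hcd]
          exact hret.2.1.le
      rw [hS, Finset.mem_insert, Finset.mem_singleton] at haS hbS
      rcases haS with rfl | rfl <;> rcases hbS with rfl | rfl <;> simp only [hsrc]
  · have hle : inDeg G u ≤ 1 := by
      rcases hphy.types u (hphy.tgt_mem a ha) with h | h | h | h
      · exact h.2.le.trans zero_le_one
      · exact h.2.1.le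
      · exact h.2.1.le
      · exact absurd h hret
    exact congrArg G.src (Finset.card_le_one.1 hle a haS b hbS)

lemma eq_of_isSafeWalk_length_eq (hphy : IsPhylo G) {v : ℕ} :
    ∀ {l₁ l₂ : List ℕ} {u₁ u₂ : ℕ}, IsWalk G l₁ u₁ v → IsSafeWalk G l₁ →
      IsWalk G l₂ u₂ v → IsSafeWalk G l₂ → l₁.length = l₂.length → u₁ = u₂
  | [], [], _, _, h₁, _, h₂, _, _ => h₁.1.trans h₂.1.symm
  | [], _ :: _, _, _, _, _, _, _, hlen
  | _ :: _, [], _, _, _, _, _, _, hlen => by simp at hlen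
  | a :: l₁, b :: l₂, _, _, ⟨ha, rfl, h₁⟩, s₁, ⟨hb, rfl, h₂⟩, s₂, hlen => by
    rw [IsSafeWalk, List.forall_mem_cons] at s₁ s₂
    have htgt : G.tgt a = G.tgt b :=
      eq_of_isSafeWalk_length_eq hphy h₁ s₁.2 h₂ s₂.2 (by simpa using hlen)
    exact hphy.src_eq_of_tgt_eq ha hb htgt s₁.1

lemma exists_isSafeWalk_of_length_le (hphy : IsPhylo G) {l₁ l₂ : List ℕ} {u₁ u₂ v : ℕ}
    (h₁ : IsWalk G l₁ u₁ v) (s₁ : IsSafeWalk G l₁) (h₂ : IsWalk G l₂ u₂ v)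
    (s₂ : IsSafeWalk G l₂) (hlen : l₁.length ≤ l₂.length) :
    ∃ m, IsWalk G m u₂ u₁ ∧ IsSafeWalk G m := by
  set k := l₂.length - l₁.length
  rw [← List.take_append_drop k l₂, hphy.isWalk_append_iff] at h₂
  obtain ⟨z, htake, hdrop⟩ := h₂
  have hz : z = u₁ :=
    hphy.eq_of_isSafeWalk_length_eq hdrop (fun x hx => s₂ x (List.mem_of_mem_drop hx)) h₁ s₁
      (by simp only [List.length_drop]; omega)
  exact ⟨_, hz ▸ htake, fun x hx => s₂ x (List.mem_of_mem_take hx)⟩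

lemma tgt_eq_of_isSafeWalk (hphy : IsPhylo G) {e₁ e₂ : ℕ} {m : List ℕ}
    (he₁ : e₁ ∈ G.arcs) (he₂ : e₂ ∈ G.arcs) (hsrc : G.src e₁ = G.src e₂)
    (hm : IsWalk G m (G.tgt e₂) (G.tgt e₁)) (sm : IsSafeWalk G m) :
    G.tgt e₁ = G.tgt e₂ := by
  rcases eq_or_ne m [] with rfl | hne
  · exact hm.1.symm
  obtain ⟨m', b, z, rfl, hm', hb, hbz, hbt⟩ := hphy.exists_concat_of_isWalk hm hne
  have hsb : G.src b = G.src e₁ :=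
    hphy.src_eq_of_tgt_eq hb he₁ hbt (sm b (List.mem_append_right _ List.mem_cons_self))
  have hcycle : IsWalk G (e₂ :: m') (G.src e₂) (G.src e₂) :=
    ⟨he₂, rfl, by rwa [← hsrc, ← hsb, hbz]⟩
  exact absurd hcycle (hphy.acyclic _ _ (List.cons_ne_nil _ _))

lemma tgt_eq_of_src_eq (hphy : IsPhylo G) {v : ℕ}
    (hsafe : ∀ u ∈ G.verts, ∃ l, IsWalk G l u v ∧ IsSafeWalk G l) {e₁ e₂ : ℕ}
    (he₁ : e₁ ∈ G.arcs) (he₂ : e₂ ∈ G.arcs) (hsrc : G.src e₁ = G.src e₂) :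
    G.tgt e₁ = G.tgt e₂ := by
  obtain ⟨l₁, h₁, s₁⟩ := hsafe _ (hphy.tgt_mem e₁ he₁)
  obtain ⟨l₂, h₂, s₂⟩ := hsafe _ (hphy.tgt_mem e₂ he₂)
  rcases le_total l₁.length l₂.length with hle | hle
  · obtain ⟨m, hm, sm⟩ := hphy.exists_isSafeWalk_of_length_le h₁ s₁ h₂ s₂ hle
    exact hphy.tgt_eq_of_isSafeWalk he₁ he₂ hsrc hm sm
  · obtain ⟨m, hm, sm⟩ := hphy.exists_isSafeWalk_of_length_le h₂ s₂ h₁ s₁ hle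
    exact (hphy.tgt_eq_of_isSafeWalk he₂ he₁ hsrc.symm hm sm).symm

end IsPhylo

lemma nPaths_eq_two_mul {G : Net} {u w e₁ e₂ : ℕ} (huw : u ≠ w) (hne : e₁ ≠ e₂)
    (hout : G.arcs.filter (G.src · = u) = {e₁, e₂}) (htgt : G.tgt e₁ = G.tgt e₂) :
    nPaths G u w = 2 * nPaths G (G.tgt e₁) w := by
  have hmem : ∀ a, a ∈ G.arcs ∧ G.src a = u ↔ a = e₁ ∨ a = e₂ := by
    simpa [Finset.ext_iff] using hout
  have hwalks : {l | IsWalk G l u w} = (fun p : ℕ × List ℕ => p.1 :: p.2) ''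
      ({e₁, e₂} ×ˢ {l | IsWalk G l (G.tgt e₁) w}) := by
    ext l
    rcases l with _ | ⟨a, t⟩
    · simp [IsWalk, huw]
    · simp only [Set.mem_ofPred_eq, IsWalk, Set.mem_image, Set.mem_prod, Set.mem_insert_iff,
        Set.mem_singleton_iff, Prod.exists, List.cons.injEq]
      constructor
      · rintro ⟨ha, hs, ht⟩
        have hae := (hmem a).1 ⟨ha, hs⟩
        refine ⟨a, t, ⟨hae, ?_⟩, rfl, rfl⟩
        rcases hae with rfl | rfl
        exacts [ht, htgt ▸ ht]
      · rintro ⟨a, t, ⟨hae, ht⟩, rfl, rfl⟩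
        obtain ⟨ha, hs⟩ := (hmem a).2 hae
        refine ⟨ha, hs, ?_⟩
        rcases hae with rfl | rfl
        exacts [ht, htgt ▸ ht]
  have hinj : Function.Injective fun p : ℕ × List ℕ => p.1 :: p.2 :=
    fun p q h => Prod.ext (List.cons.inj h).1 (List.cons.inj h).2
  rw [nPaths, hwalks, Set.ncard_image_of_injective _ hinj, Set.ncard_prod, Set.ncard_pair hne]
  rfl

/-- The ploidy profile `(3)` on a single-element set `{x₁}` is
not tree-child: no phylogenetic network with a single leaf `v` in which the number
of directed paths from the root to `v` equals 3 is tree-child. -/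
theorem profile_three_not_tree_child (G : Net) (r v : ℕ) (hphy : IsPhylo G)
    (hr : IsRootN G r) (hv : IsLeafN G v) (huniq : ∀ w, IsLeafN G w → w = v)
    (h3 : nPaths G r v = 3) :
    ¬ IsTreeChild G := by
  intro hTC
  obtain ⟨e₁, e₂, hne, hout⟩ := Finset.card_eq_two.1 (hphy.root_out r hr)
  have he₁ := Finset.mem_filter.1 (hout ▸ Finset.mem_insert_self e₁ {e₂})
  have he₂ :=
    Finset.mem_filter.1 (hout ▸ Finset.mem_insert_of_mem (Finset.mem_singleton_self e₂))
  have htgt : G.tgt e₁ = G.tgt e₂ := hphy.tgt_eq_of_src_eq (hTC.exists_isSafeWalk huniq)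
    he₁.1 he₂.1 (he₁.2.trans he₂.2.symm)
  have hrv : r ≠ v := fun h => by simpa [h, hv.2.1] using hr.2
  have hcount := nPaths_eq_two_mul hrv hne hout htgt
  omega

end Ploidy
end

section
/- The ploidy profile (3) on a single-element set {x_1} is a weak orchard but not an orchard: there exists a phylogenetic network on {x_1} realizing (3) that admits a complete weak cherry modification sequence, but no phylogenetic network on {x_1} realizing (3) admits a complete cherry modification sequence. -/
/-!
Formalization preamble for "Autopolyploidy, allopolyploidy, and phylogenetic
networks with horizontal arcs" (Huber & Maher).

Networks are finite directed multigraphs whose vertices and arcs are (finitely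
many) natural numbers; parallel arcs (beads) are allowed, loops are not.
-/

namespace Ploidy

/-!
The network with root `0`, a bead from `1` to `2`, a reticulation `3` with parents `0` and
`2`, and leaf `4` has `1 + 2 = 3` root-to-leaf paths. Trimming it deletes the vertices `1` and
`2`, which leaves a bead `0 ⇉ 3` above the leaf, and `simp` collapses that.

Conversely, a network with a single leaf has no cherry and no reticulated cherry, so a
cherry modification sequence has to start with `simp`. This needs the parent of the leaf to
be the reticulation of a bead, so the number of root-to-leaf paths is twice the number of
paths to the tree vertex of the bead: it is even, not `3`.
-/

instance (G : Net) (v : ℕ) : Decidable (IsRootN G v) := inferInstanceAs (Decidable (_ ∧ _))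

instance (G : Net) (v : ℕ) : Decidable (IsReticN G v) := inferInstanceAs (Decidable (_ ∧ _))

instance (G : Net) (v : ℕ) : Decidable (IsTreeVert G v) := inferInstanceAs (Decidable (_ ∧ _))

instance (G : Net) (a u v : ℕ) : Decidable (ArcFT G a u v) :=
  inferInstanceAs (Decidable (_ ∧ _))

def walkSet (G : Net) (u v : ℕ) : Set (List ℕ) := {l | IsWalk G l u v}

lemma nPaths_eq_ncard_walkSet (G : Net) (u v : ℕ) : nPaths G u v = (walkSet G u v).ncard :=
  rfl

lemma append_singleton_injective (e : ℕ) : Function.Injective (· ++ [e] : List ℕ → List ℕ) :=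
  fun _ _ h => List.append_cancel_right h

lemma disjoint_image_append_singleton {e₁ e₂ : ℕ} (hne : e₁ ≠ e₂) (s t : Set (List ℕ)) :
    Disjoint ((· ++ [e₁]) '' s) ((· ++ [e₂]) '' t) := by
  rw [Set.disjoint_left]
  rintro _ ⟨l₁, -, rfl⟩ ⟨l₂, -, h⟩
  exact hne (List.singleton_inj.1 (List.append_inj' h rfl).2).symm

section Walks

variable {G : Net}

lemma ne_of_isRootN {r w : ℕ} (hr : IsRootN G r) (hw : inDeg G w ≠ 0) : r ≠ w := by
  rintro rfl
  exact hw hr.2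

lemma le_of_isWalk (hlt : ∀ a ∈ G.arcs, G.src a < G.tgt a) :
    ∀ {l : List ℕ} {u w : ℕ}, IsWalk G l u w → u ≤ w
  | [], _, _, h => h.1.le
  | a :: _, _, _, ⟨ha, rfl, hl⟩ => (hlt a ha).le.trans (le_of_isWalk hlt hl)

lemma not_isWalk_self_of_src_lt_tgt (hlt : ∀ a ∈ G.arcs, G.src a < G.tgt a) (v : ℕ)
    (l : List ℕ) (hl : l ≠ []) : ¬ IsWalk G l v v := by
  rcases l with _ | ⟨a, l⟩
  · exact absurd rfl hl
  · rintro ⟨ha, rfl, hw⟩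
    exact (hlt a ha).not_ge (le_of_isWalk hlt hw)

variable (hG : IsPhylo G)
include hG

lemma isWalk_append_singleton_iff {e : ℕ} :
    ∀ {l : List ℕ} {u w : ℕ},
      IsWalk G (l ++ [e]) u w ↔ IsWalk G l u (G.src e) ∧ e ∈ G.arcs ∧ G.tgt e = w
  | [], u, w => by
      simp only [List.nil_append, IsWalk]
      constructor
      · rintro ⟨he, rfl, rfl, -⟩
        exact ⟨⟨rfl, hG.src_mem e he⟩, he, rfl⟩
      · rintro ⟨⟨rfl, -⟩, he, rfl⟩
        exact ⟨he, rfl, rfl, hG.tgt_mem e he⟩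
  | a :: l, u, w => by
      simp only [List.cons_append, IsWalk, isWalk_append_singleton_iff, and_assoc]

lemma walkSet_self {r : ℕ} (hr : r ∈ G.verts) : walkSet G r r = {[]} := by
  ext l
  rw [Set.mem_singleton_iff]
  change IsWalk G l r r ↔ l = []
  constructor
  · intro hl
    by_contra hne
    exact hG.acyclic r l hne hl
  · rintro rfl
    exact ⟨rfl, hr⟩

lemma mem_walkSet_iff {l : List ℕ} {r w : ℕ} (hrw : r ≠ w) :
    l ∈ walkSet G r w ↔
      ∃ e ∈ G.arcs, G.tgt e = w ∧ l ∈ (· ++ [e]) '' walkSet G r (G.src e) := by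
  constructor
  · intro hl
    rcases l.eq_nil_or_concat' with rfl | ⟨l', e, rfl⟩
    · exact absurd hl.1 hrw
    · obtain ⟨hl', he, hew⟩ := (isWalk_append_singleton_iff hG).1 hl
      exact ⟨e, he, hew, l', hl', rfl⟩
  · rintro ⟨e, he, hew, l', hl', rfl⟩
    exact (isWalk_append_singleton_iff hG).2 ⟨hl', he, hew⟩

lemma walkSet_eq_image_of_inDeg_eq_one {r p w e : ℕ} (he : ArcFT G e p w)
    (hw : inDeg G w = 1) (hrw : r ≠ w) :
    walkSet G r w = (· ++ [e]) '' walkSet G r p := by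
  ext l
  rw [mem_walkSet_iff hG hrw]
  constructor
  · rintro ⟨e', he', hew, hl⟩
    obtain rfl : e' = e := Finset.card_le_one.1 hw.le _ (Finset.mem_filter.2 ⟨he', hew⟩) _
      (Finset.mem_filter.2 ⟨he.1, he.2.2⟩)
    rwa [he.2.1] at hl
  · intro hl
    exact ⟨e, he.1, he.2.2, by rwa [he.2.1]⟩

lemma walkSet_eq_union_of_inDeg_eq_two {r p₁ p₂ w e₁ e₂ : ℕ} (he₁ : ArcFT G e₁ p₁ w)
    (he₂ : ArcFT G e₂ p₂ w) (hne : e₁ ≠ e₂) (hw : inDeg G w = 2) (hrw : r ≠ w) :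
    walkSet G r w = (· ++ [e₁]) '' walkSet G r p₁ ∪ (· ++ [e₂]) '' walkSet G r p₂ := by
  have hin : G.arcs.filter (fun a => G.tgt a = w) = {e₁, e₂} :=
    (Finset.eq_of_subset_of_card_le
      (Finset.insert_subset_iff.2 ⟨Finset.mem_filter.2 ⟨he₁.1, he₁.2.2⟩,
        Finset.singleton_subset_iff.2 (Finset.mem_filter.2 ⟨he₂.1, he₂.2.2⟩)⟩)
      (by rw [Finset.card_pair hne]; exact hw.le)).symm
  ext l
  rw [mem_walkSet_iff hG hrw, Set.mem_union]
  constructor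
  · rintro ⟨e, he, hew, hl⟩
    have he' : e ∈ ({e₁, e₂} : Finset ℕ) := hin ▸ Finset.mem_filter.2 ⟨he, hew⟩
    rcases Finset.mem_insert.1 he' with rfl | he'
    · exact Or.inl (by rwa [he₁.2.1] at hl)
    · obtain rfl := Finset.mem_singleton.1 he'
      exact Or.inr (by rwa [he₂.2.1] at hl)
  · rintro (hl | hl)
    · exact ⟨e₁, he₁.1, he₁.2.2, by rwa [he₁.2.1]⟩
    · exact ⟨e₂, he₂.1, he₂.2.2, by rwa [he₂.2.1]⟩

lemma nPaths_eq_of_inDeg_eq_one {r p w e : ℕ} (he : ArcFT G e p w) (hw : inDeg G w = 1)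
    (hrw : r ≠ w) : nPaths G r w = nPaths G r p := by
  rw [nPaths_eq_ncard_walkSet, walkSet_eq_image_of_inDeg_eq_one hG he hw hrw,
    Set.ncard_image_of_injective _ (append_singleton_injective e), nPaths_eq_ncard_walkSet]

lemma nPaths_eq_add_of_inDeg_eq_two {r p₁ p₂ w e₁ e₂ : ℕ} (he₁ : ArcFT G e₁ p₁ w)
    (he₂ : ArcFT G e₂ p₂ w) (hne : e₁ ≠ e₂) (hw : inDeg G w = 2) (hrw : r ≠ w)
    (h₁ : (walkSet G r p₁).Finite) (h₂ : (walkSet G r p₂).Finite) :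
    nPaths G r w = nPaths G r p₁ + nPaths G r p₂ := by
  rw [nPaths_eq_ncard_walkSet, walkSet_eq_union_of_inDeg_eq_two hG he₁ he₂ hne hw hrw,
    Set.ncard_union_eq (disjoint_image_append_singleton hne _ _) (h₁.image _) (h₂.image _),
    Set.ncard_image_of_injective _ (append_singleton_injective e₁),
    Set.ncard_image_of_injective _ (append_singleton_injective e₂)]
  rfl

/-- Unlike `nPaths_eq_add_of_inDeg_eq_two`, this needs no finiteness: if there are
infinitely many walks to `u`, both sides are `0`. -/
lemma nPaths_eq_two_mul_of_bead {r u h e₁ e₂ : ℕ} (he₁ : ArcFT G e₁ u h)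
    (he₂ : ArcFT G e₂ u h) (hne : e₁ ≠ e₂) (hh : inDeg G h = 2) (hrh : r ≠ h) :
    nPaths G r h = 2 * nPaths G r u := by
  by_cases hfin : (walkSet G r u).Finite
  · rw [two_mul]
    exact nPaths_eq_add_of_inDeg_eq_two hG he₁ he₂ hne hh hrh hfin hfin
  · have hinf : (walkSet G r h).Infinite := by
      rw [walkSet_eq_union_of_inDeg_eq_two hG he₁ he₂ hne hh hrh]
      exact ((Set.Infinite.image (append_singleton_injective e₁).injOn hfin).mono
        Set.subset_union_left)
    rw [nPaths_eq_ncard_walkSet, nPaths_eq_ncard_walkSet, hinf.ncard, Set.Infinite.ncard hfin]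

end Walks

section Orchard

variable {G : Net}

lemma not_isSingleV_of_isLeafN {v : ℕ} (hv : IsLeafN G v) : ¬ IsSingleV G := by
  rintro ⟨-, -, harcs⟩
  have hdeg := hv.2.1
  simp [inDeg, harcs] at hdeg

lemma simpOp_of_cherryModOp {G' : Net} {v : ℕ} (hsole : ∀ w, IsLeafN G w → w = v)
    (h : CherryModOp G G') : SimpOp G G' := by
  rcases h with ⟨a, b, -, -, -, hab, ha, hb, -⟩ | ⟨a, b, -, -, -, -, -, -, -, -, -, hab, ha, hb, -⟩ |
    hs
  · exact absurd ((hsole a ha).trans (hsole b hb).symm) hab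
  · exact absurd ((hsole a ha).trans (hsole b hb).symm) hab
  · exact hs

lemma even_nPaths_of_simpOp (hG : IsPhylo G) {G' : Net} {r v : ℕ} (hr : IsRootN G r)
    (hv : IsLeafN G v) (hs : SimpOp G G') : Even (nPaths G r v) := by
  obtain ⟨a, h, u, e₁, e₂, e₃, -, hsole, hh, he₁, he₂, hne, he₃, -⟩ := hs
  obtain rfl := hsole v hv
  rw [nPaths_eq_of_inDeg_eq_one hG he₃ hv.2.1 (ne_of_isRootN hr (by simp [hv.2.1])),
    nPaths_eq_two_mul_of_bead hG he₁ he₂ hne hh.2.1 (ne_of_isRootN hr (by simp [hh.2.1]))]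
  exact even_two_mul _

theorem not_isOrchardN_of_odd_nPaths (hG : IsPhylo G) {r v : ℕ} (hr : IsRootN G r)
    (hv : IsLeafN G v) (hsole : ∀ w, IsLeafN G w → w = v) (hodd : Odd (nPaths G r v)) :
    ¬ IsOrchardN G := by
  rintro ⟨G', hseq, hsingle⟩
  rcases hseq.cases_head with rfl | ⟨G'', hstep, -⟩
  · exact not_isSingleV_of_isLeafN hv hsingle
  · exact Nat.not_even_iff_odd.2 hodd
      (even_nPaths_of_simpOp hG hr hv (simpOp_of_cherryModOp hsole hstep))

end Orchard

def threePathNet : Net := mkNet [(0, 1), (0, 3), (1, 2), (1, 2), (2, 3), (3, 4)]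

/-- `TrimOp` keeps the identifiers of the surviving arcs: the arcs `0, 1` of `threePathNet`
now form the bead `0 ⇉ 3`, and arc `5` still enters the leaf. -/
def beadLeafNet : Net where
  verts := {0, 3, 4}
  arcs := {0, 1, 5}
  src := fun a => if a = 5 then 3 else 0
  tgt := fun a => if a = 5 then 4 else 3

def pointNet : Net where
  verts := {4}
  arcs := ∅
  src := fun _ => 0
  tgt := fun _ => 0

lemma threePathNet_isPhylo : IsPhylo threePathNet where
  src_mem := by decide
  tgt_mem := by decide
  no_loop := by decide
  acyclic := not_isWalk_self_of_src_lt_tgt (by decide)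
  root_exu := ⟨0, by decide, fun w hw =>
    (by decide : ∀ w ∈ threePathNet.verts, IsRootN threePathNet w → w = 0) w hw.1 hw⟩
  root_out := fun r hr =>
    (by decide : ∀ w ∈ threePathNet.verts, IsRootN threePathNet w → outDeg threePathNet w = 2)
      r hr.1 hr
  types := by decide

lemma threePathNet_sole_leaf : ∀ w, IsLeafN threePathNet w → w = 4 := fun w hw =>
  (by decide : ∀ w ∈ threePathNet.verts, IsLeafN threePathNet w → w = 4) w hw.1 hw

lemma nPaths_threePathNet : nPaths threePathNet 0 4 = 3 := by
  have hG := threePathNet_isPhylo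
  have h00 : walkSet threePathNet 0 0 = {[]} := walkSet_self hG (by decide)
  have h01 : walkSet threePathNet 0 1 = (· ++ [0]) '' walkSet threePathNet 0 0 :=
    walkSet_eq_image_of_inDeg_eq_one hG (by decide) (by decide) (by decide)
  have h02 : walkSet threePathNet 0 2 = (· ++ [2]) '' walkSet threePathNet 0 1 ∪
      (· ++ [3]) '' walkSet threePathNet 0 1 :=
    walkSet_eq_union_of_inDeg_eq_two hG (by decide) (by decide) (by decide) (by decide)
      (by decide)
  calc nPaths threePathNet 0 4 = nPaths threePathNet 0 3 :=
        nPaths_eq_of_inDeg_eq_one hG (e := 5) (by decide) (by decide) (by decide)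
    _ = nPaths threePathNet 0 0 + nPaths threePathNet 0 2 :=
        nPaths_eq_add_of_inDeg_eq_two hG (e₁ := 1) (e₂ := 4) (by decide) (by decide)
          (by decide) (by decide) (by decide) (by rw [h00]; exact Set.toFinite _)
          (by rw [h02, h01, h00]; exact Set.toFinite _)
    _ = nPaths threePathNet 0 0 + 2 * nPaths threePathNet 0 0 := by
        rw [nPaths_eq_two_mul_of_bead hG (u := 1) (h := 2) (e₁ := 2) (e₂ := 3) (by decide)
          (by decide) (by decide) (by decide) (by decide),
          nPaths_eq_of_inDeg_eq_one hG (p := 0) (w := 1) (e := 0) (by decide) (by decide)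
          (by decide)]
    _ = 3 := by rw [nPaths_eq_ncard_walkSet, h00, Set.ncard_singleton]

lemma trimOp_threePathNet : TrimOp threePathNet beadLeafNet :=
  ⟨4, 3, 5, by decide, threePathNet_sole_leaf, by decide, by decide,
    Or.inr ⟨1, 0, 2, 0, 2, 3, 1, 4, by decide, by decide, by decide, by decide, by decide,
      by decide, by decide, by decide, by decide, by decide, by decide, by decide, by decide⟩⟩

lemma simpOp_beadLeafNet : SimpOp beadLeafNet pointNet :=
  ⟨4, 3, 0, 0, 1, 5, by decide,
    fun w hw => (by decide : ∀ w ∈ beadLeafNet.verts, IsLeafN beadLeafNet w → w = 4) w hw.1 hw,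
    by decide, by decide, by decide, by decide, by decide,
    Or.inl ⟨by decide, by decide, by decide⟩⟩

lemma threePathNet_isWeakOrchardN : IsWeakOrchardN threePathNet :=
  ⟨pointNet, .head (Or.inr trimOp_threePathNet) (.single (Or.inl (Or.inr (Or.inr
    simpOp_beadLeafNet)))), 4, rfl, rfl⟩

/-- The ploidy profile `(3)` on a single-element set `{x₁}` is a
weak orchard but not an orchard: some phylogenetic network with a single leaf and
exactly 3 root-to-leaf paths admits a complete weak cherry modification sequence,
but no such network admits a complete cherry modification sequence. -/
theorem profile_three_weak_orchard_not_orchard :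
    (∃ (G : Net) (r v : ℕ), IsPhylo G ∧ IsRootN G r ∧ IsLeafN G v ∧
      (∀ w, IsLeafN G w → w = v) ∧ nPaths G r v = 3 ∧ IsWeakOrchardN G) ∧
    (∀ (G : Net) (r v : ℕ), IsPhylo G → IsRootN G r → IsLeafN G v →
      (∀ w, IsLeafN G w → w = v) → nPaths G r v = 3 → ¬ IsOrchardN G) :=
  ⟨⟨threePathNet, 0, 4, threePathNet_isPhylo, by decide, by decide, threePathNet_sole_leaf,
      nPaths_threePathNet, threePathNet_isWeakOrchardN⟩,
    fun _ _ _ hG hr hv hsole h3 =>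
      not_isOrchardN_of_odd_nPaths hG hr hv hsole (h3 ▸ by decide)⟩

end Ploidy
end
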